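/- arXiv:1702.00121 — 4 statements merged into one kernel-verified Lean document; each statement's English description precedes it below -/
import Mathlib

section
/- Let ℓ be an odd prime. The set of indices [N_s(ℓ) : G] over subgroups G of N_s(ℓ) that belong to N_s(ℓ) equals the set of positive integers dividing an element of {(ℓ−1)²/q : q an odd prime dividing ℓ−1} ∪ {(ℓ−1)²/4 if 4 divides ℓ−1, and (ℓ−1)²/2 otherwise}. -/
open Matrix

abbrev GL2 (ℓ : ℕ) : Type := GL (Fin 2) (ZMod ℓ)

namespace Paper

/-- The underlying matrix of an element of `GL₂(ℤ/ℓℤ)`. -/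
def mat {ℓ : ℕ} (g : GL2 ℓ) : Matrix (Fin 2) (Fin 2) (ZMod ℓ) := ↑g

/-- The set of scalar matrices `Z(ℓ)`. -/
def ZSet (ℓ : ℕ) : Set (GL2 ℓ) :=
  { g | ∃ x : ZMod ℓ, mat g = x • (1 : Matrix (Fin 2) (Fin 2) (ZMod ℓ)) }

/-- The split Cartan `C_s(ℓ)`: invertible diagonal matrices. -/
def CsSet (ℓ : ℕ) : Set (GL2 ℓ) := { g | mat g 0 1 = 0 ∧ mat g 1 0 = 0 }

/-- The normalizer `N_s(ℓ)` of the split Cartan: diagonal and antidiagonal matrices. -/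
def NsSet (ℓ : ℕ) : Set (GL2 ℓ) :=
  CsSet ℓ ∪ { g | mat g 0 0 = 0 ∧ mat g 1 1 = 0 }

/-- The nonsplit Cartan `C_ns(ℓ)` relative to the nonsquare `ε`. -/
def CnsSet (ℓ : ℕ) (ε : ZMod ℓ) : Set (GL2 ℓ) :=
  { g | ∃ x y : ZMod ℓ, mat g = !![x, ε * y; y, x] }

/-- The normalizer `N_ns(ℓ)` of the nonsplit Cartan. -/
def NnsSet (ℓ : ℕ) (ε : ZMod ℓ) : Set (GL2 ℓ) :=
  CnsSet ℓ ε ∪ { g | ∃ x y : ZMod ℓ, mat g = !![x, -(ε * y); y, -x] }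

/-- The ramified Cartan `C_r(ℓ)`. -/
def CrSet (ℓ : ℕ) : Set (GL2 ℓ) :=
  { g | mat g 1 0 = 0 ∧ mat g 0 0 = mat g 1 1 }

/-- The Borel subgroup `B(ℓ)`: upper triangular matrices. -/
def BorelSet (ℓ : ℕ) : Set (GL2 ℓ) := { g | mat g 1 0 = 0 }

/-- `G` is conjugate in `GL₂(ℤ/ℓℤ)` to a subgroup of the set `M`. -/
def ConjSub {ℓ : ℕ} (G : Subgroup (GL2 ℓ)) (M : Set (GL2 ℓ)) : Prop :=
  ∃ a : GL2 ℓ, ∀ g ∈ G, a * g * a⁻¹ ∈ M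

/-- `G` belongs to `Z(ℓ)`. -/
def BelongsZ {ℓ : ℕ} (G : Subgroup (GL2 ℓ)) : Prop := ConjSub G (ZSet ℓ)

/-- `G` belongs to `C_s(ℓ)`. -/
def BelongsCs {ℓ : ℕ} (G : Subgroup (GL2 ℓ)) : Prop :=
  ConjSub G (CsSet ℓ) ∧ ¬ ConjSub G (ZSet ℓ)

/-- `G` belongs to `C_ns(ℓ)`. -/
def BelongsCns {ℓ : ℕ} (ε : ZMod ℓ) (G : Subgroup (GL2 ℓ)) : Prop :=
  ConjSub G (CnsSet ℓ ε) ∧ ¬ ConjSub G (ZSet ℓ)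

/-- `G` belongs to `N_s(ℓ)`. -/
def BelongsNs {ℓ : ℕ} (G : Subgroup (GL2 ℓ)) : Prop :=
  ConjSub G (NsSet ℓ) ∧ ¬ ConjSub G (CsSet ℓ)

/-- `G` belongs to `N_ns(ℓ)`. -/
def BelongsNns {ℓ : ℕ} (ε : ZMod ℓ) (G : Subgroup (GL2 ℓ)) : Prop :=
  ConjSub G (NnsSet ℓ ε) ∧ ¬ ConjSub G (CnsSet ℓ ε)

/-- `G` belongs to the ramified Cartan `C_r(ℓ)`. -/
def BelongsCr {ℓ : ℕ} (G : Subgroup (GL2 ℓ)) : Prop :=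
  ConjSub G (CrSet ℓ) ∧ ¬ ConjSub G (ZSet ℓ)

/-- `H` is a twist of `G`: either `H = ⟨G, -I⟩`, or `H` is an index-2 subgroup of
`⟨G, -I⟩` not containing `-I`. -/
def TwistOf {ℓ : ℕ} (G H : Subgroup (GL2 ℓ)) : Prop :=
  H = G ⊔ Subgroup.closure {(-1 : GL2 ℓ)} ∨
    (H ≤ G ⊔ Subgroup.closure {(-1 : GL2 ℓ)} ∧
      H.relIndex (G ⊔ Subgroup.closure {(-1 : GL2 ℓ)}) = 2 ∧
      (-1 : GL2 ℓ) ∉ H)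

/-- `H` fixes a nonzero vector of `(ℤ/ℓℤ)²`. -/
def FixesVec {ℓ : ℕ} (H : Subgroup (GL2 ℓ)) : Prop :=
  ∃ v : Fin 2 → ZMod ℓ, v ≠ 0 ∧ ∀ h ∈ H, Matrix.mulVec (mat h) v = v

end Paper

/-!
A subgroup `G ≤ N_s(ℓ)` that is not conjugate into `C_s(ℓ)` contains an antidiagonal element, so
`K = G ∩ C_s(ℓ)` has index 2 in `G`, just as `C_s(ℓ)` has index 2 in `N_s(ℓ)`; hence
`[N_s(ℓ) : G] · |K| = (ℓ - 1)²`. The theorem then amounts to determining the possible orders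
`d = |K|`: they are the divisors of `(ℓ - 1)²` except `1`, and except `2` when `-1` is a square
mod `ℓ`, i.e. when `4 ∣ ℓ - 1`.

If `|K| ≤ 2`, conjugation by an antidiagonal `a ∈ G` swaps the diagonal entries and must fix
every element of `K`, so `K ⊆ {±1}`, `G ⊆ {±1, ±a}` and `a² = ±1`. When this scalar is a square,
`a` is diagonalisable, and with it all of `G`; this rules out `d = 1` (where `a² = 1`), and
`d = 2` when `-1` is a square.

Conversely write `d = uv` with `v ∣ u ∣ ℓ - 1`, and let `K` be the diagonal matrices
`diag(x, z/x)` with `x ∈ μ_u`, `z ∈ μ_v`. It is stable under swapping the entries, so adjoining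
`[[0, 1], [1, 0]]` gives a subgroup with `G ∩ C_s(ℓ) = K`. For `d > 2` the group `K` contains a
non-scalar matrix, which does not commute with `[[0, 1], [1, 0]]`. For `d = 2` one adjoins
`[[0, 1], [-1, 0]]` to `K = {±1}` instead; its square is `-1`, which is not a square when
`ℓ ≡ 3 mod 4`.
-/

theorem Nat.dvd_sq_div_of_mul_eq_sq {n d e k : ℕ} (h : n * d = e ^ 2) (hk : k ∣ d) :
    n ∣ e ^ 2 / k := by
  rw [← h, Nat.mul_div_assoc n hk]
  exact dvd_mul_right n _

theorem Nat.exists_mul_mul_eq_sq_of_dvd_sq_div {n e k : ℕ} (he : e ≠ 0) (hk : k ∣ e ^ 2)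
    (hn : n ∣ e ^ 2 / k) : ∃ j, 0 < j ∧ n * (j * k) = e ^ 2 := by
  obtain ⟨j, hj⟩ := hn
  have hjk : n * (j * k) = e ^ 2 := by rw [← mul_assoc, ← hj, Nat.div_mul_cancel hk]
  refine ⟨j, Nat.pos_of_ne_zero fun hj0 => ?_, hjk⟩
  rw [hj0, zero_mul, mul_zero, eq_comm] at hjk
  exact he (pow_eq_zero_iff two_ne_zero |>.1 hjk)

theorem Nat.two_dvd_of_forall_prime_dvd_eq_two {d : ℕ} (hd : 2 ≤ d)
    (h : ∀ {p : ℕ}, p.Prime → p ∣ d → p = 2) : 2 ∣ d ∧ (d ≠ 2 → 4 ∣ d) := by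
  obtain ⟨k, rfl⟩ : ∃ k, d = 2 ^ k := ⟨_, Nat.eq_prime_pow_of_unique_prime_dvd (by omega) h⟩
  rcases k with _ | _ | k
  · simp at hd
  · simp
  · exact ⟨dvd_pow_self 2 (by omega), fun _ => ⟨2 ^ k, by ring⟩⟩

theorem Nat.pos_dvd_sq_div_iff_exists_mul_eq_sq {e n : ℕ} (he : Even e) (he0 : e ≠ 0) :
    (0 < n ∧ ∃ m : ℕ, ((∃ q : ℕ, q.Prime ∧ Odd q ∧ q ∣ e ∧ m = e ^ 2 / q) ∨
        m = e ^ 2 / (if 4 ∣ e then 4 else 2)) ∧ n ∣ m) ↔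
      ∃ d, n * d = e ^ 2 ∧ 2 ≤ d ∧ (d = 2 → ¬4 ∣ e) := by
  have he2 : 2 ∣ e ^ 2 := dvd_pow (even_iff_two_dvd.1 he) two_ne_zero
  constructor
  · rintro ⟨-, m, (⟨q, hq, hqo, hqe, rfl⟩ | rfl), hnm⟩
    · obtain ⟨j, hj, hnj⟩ := exists_mul_mul_eq_sq_of_dvd_sq_div he0 (dvd_pow hqe two_ne_zero) hnm
      have hq3 : 3 ≤ q := by have := hq.two_le; rcases hqo with ⟨r, rfl⟩; omega
      refine ⟨j * q, hnj, ?_, fun h => ?_⟩ <;> nlinarith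
    · split_ifs at hnm with h4
      · obtain ⟨j, hj, hnj⟩ := exists_mul_mul_eq_sq_of_dvd_sq_div he0
          (h4.trans (dvd_pow_self e two_ne_zero)) hnm
        exact ⟨j * 4, hnj, by omega, by omega⟩
      · obtain ⟨j, hj, hnj⟩ := exists_mul_mul_eq_sq_of_dvd_sq_div he0 he2 hnm
        exact ⟨j * 2, hnj, by omega, fun _ => h4⟩
  · rintro ⟨d, hnd, hd2, hd4⟩
    refine ⟨Nat.pos_of_ne_zero fun hn => he0 ?_, ?_⟩
    · rw [hn, zero_mul, eq_comm] at hnd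
      exact pow_eq_zero_iff two_ne_zero |>.1 hnd
    by_cases hq : ∃ q : ℕ, q.Prime ∧ Odd q ∧ q ∣ d
    · obtain ⟨q, hq, hqo, hqd⟩ := hq
      have hqe : q ∣ e := hq.dvd_of_dvd_pow (hnd ▸ dvd_mul_of_dvd_right hqd n)
      exact ⟨_, Or.inl ⟨q, hq, hqo, hqe, rfl⟩, dvd_sq_div_of_mul_eq_sq hnd hqd⟩
    push Not at hq
    obtain ⟨h2, h4⟩ := two_dvd_of_forall_prime_dvd_eq_two hd2 fun hp hpd =>
      hp.eq_two_or_odd'.resolve_right fun hpo => hq _ hp hpo hpd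
    refine ⟨_, Or.inr rfl, ?_⟩
    split_ifs with he4
    · exact dvd_sq_div_of_mul_eq_sq hnd (h4 fun h => hd4 h he4)
    · exact dvd_sq_div_of_mul_eq_sq hnd h2

theorem Nat.exists_mul_eq_dvd_dvd_of_dvd_sq {d e : ℕ} (hd : d ∣ e ^ 2) :
    ∃ u v, u * v = d ∧ v ∣ u ∧ u ∣ e := by
  obtain ⟨y, z, hy, hz, rfl⟩ := Nat.dvd_mul.1 (sq e ▸ hd)
  exact ⟨Nat.lcm y z, Nat.gcd y z, by rw [mul_comm, Nat.gcd_mul_lcm],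
    (Nat.gcd_dvd_left y z).trans (Nat.dvd_lcm_left y z), Nat.lcm_dvd hy hz⟩

theorem IsCyclic.exists_orderOf_eq_of_dvd {C : Type*} [Group C] [Finite C] [IsCyclic C] {u : ℕ}
    (hu : u ∣ Nat.card C) : ∃ a : C, orderOf a = u := by
  obtain ⟨g, hg⟩ := IsCyclic.exists_ofOrder_eq_natCard (α := C)
  exact ⟨g ^ (Nat.card C / u), hg ▸ orderOf_pow_orderOf_div (hg ▸ Nat.card_pos.ne') (hg ▸ hu)⟩

theorem Subgroup.exists_mem_iff_mem_or_inv_mul_mem {G : Type*} [Group G] {K : Subgroup G} {w : G}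
    (hw : w ∈ normalizer (K : Set G)) (hw2 : w * w ∈ K) :
    ∃ H : Subgroup G, ∀ g, g ∈ H ↔ g ∈ K ∨ w⁻¹ * g ∈ K := by
  have conj {k} (hk : k ∈ K) : w * k * w⁻¹ ∈ K := (mem_normalizer_iff.1 hw k).1 hk
  have conj' {k} (hk : k ∈ K) : w⁻¹ * k * w ∈ K := (mem_normalizer_iff''.1 hw k).1 hk
  refine ⟨{ carrier := {g | g ∈ K ∨ w⁻¹ * g ∈ K}
            one_mem' := Or.inl K.one_mem
            mul_mem' := ?_
            inv_mem' := ?_ }, fun g => Iff.rfl⟩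
  · rintro g h (hg | hg) (hh | hh)
    · exact Or.inl (K.mul_mem hg hh)
    · exact Or.inr (by simpa [mul_assoc] using K.mul_mem (conj' hg) hh)
    · exact Or.inr (by simpa [mul_assoc] using K.mul_mem hg hh)
    · refine Or.inl ?_
      rw [show g * h = w * (w⁻¹ * g) * w⁻¹ * (w * w) * (w⁻¹ * h) by group]
      exact K.mul_mem (K.mul_mem (conj hg) hw2) hh
  · rintro g (hg | hg)
    · exact Or.inl (K.inv_mem hg)
    · refine Or.inr ?_
      rw [show w⁻¹ * g⁻¹ = w⁻¹ * (w⁻¹ * g)⁻¹ * w * (w * w)⁻¹ by group]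
      exact K.mul_mem (conj' (K.inv_mem hg)) (K.inv_mem hw2)

theorem exists_swap_mem_subgroup_prod {C : Type*} [CommGroup C] {A B : Subgroup C} (hBA : B ≤ A) :
    ∃ S : Subgroup (C × C), (∀ p ∈ S, p.swap ∈ S) ∧ Nat.card S = Nat.card A * Nat.card B ∧
      (∀ x ∈ A, (x, x⁻¹) ∈ S) ∧ ∀ z ∈ B, (1, z) ∈ S := by
  let φ : C × C →* C × C := (MonoidHom.fst C C).prod (MonoidHom.snd C C / MonoidHom.fst C C)
  have hφ : Function.Injective φ := fun p q h => by
    simp only [φ, MonoidHom.prod_apply, MonoidHom.div_apply, Prod.mk.injEq] at h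
    exact Prod.ext h.1 (by simpa [h.1] using h.2)
  refine ⟨(A.prod B).map φ, ?_, ?_, fun x hx => ⟨(x, 1), ⟨hx, B.one_mem⟩, by simp [φ]⟩,
    fun z hz => ⟨(1, z), ⟨A.one_mem, hz⟩, by simp [φ]⟩⟩
  · rintro _ ⟨⟨x, z⟩, ⟨hx, hz⟩, rfl⟩
    exact ⟨(z / x, z), ⟨A.div_mem (hBA hz) hx, hz⟩, by simp [φ]⟩
  · rw [Subgroup.card_map_of_injective hφ, Nat.card_congr (A.prodEquiv B).toEquiv, Nat.card_prod]

namespace Paper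

variable {ℓ : ℕ}

def AntidiagSet (ℓ : ℕ) : Set (GL2 ℓ) := {g | mat g 0 0 = 0 ∧ mat g 1 1 = 0}

lemma mat_mul_apply (g h : GL2 ℓ) (i j : Fin 2) :
    mat (g * h) i j = mat g i 0 * mat h 0 j + mat g i 1 * mat h 1 j := by
  simp [mat, Matrix.mul_apply, Fin.sum_univ_two]

lemma ext_mat {g h : GL2 ℓ} (H : ∀ i j, mat g i j = mat h i j) : g = h :=
  Units.ext (Matrix.ext H)

lemma mat_neg (g : GL2 ℓ) : mat (-g) = -mat g := Units.val_neg g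

lemma mat_mkOfDetNeZero [Fact ℓ.Prime] (A : Matrix (Fin 2) (Fin 2) (ZMod ℓ)) (h : A.det ≠ 0) :
    mat (Matrix.GeneralLinearGroup.mkOfDetNeZero A h) = A := rfl

lemma mat_one : mat (1 : GL2 ℓ) = 1 := rfl

lemma mul_mem_antidiagSet_of_mem_csSet {g h : GL2 ℓ} (hg : g ∈ CsSet ℓ)
    (hh : h ∈ AntidiagSet ℓ) : g * h ∈ AntidiagSet ℓ := by
  constructor <;> simp [mat_mul_apply, hg.1, hg.2, hh.1, hh.2]

lemma mul_mem_antidiagSet_of_mem_antidiagSet {g h : GL2 ℓ} (hg : g ∈ AntidiagSet ℓ)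
    (hh : h ∈ CsSet ℓ) : g * h ∈ AntidiagSet ℓ := by
  constructor <;> simp [mat_mul_apply, hg.1, hg.2, hh.1, hh.2]

lemma mul_mem_csSet_of_mem_antidiagSet {g h : GL2 ℓ} (hg : g ∈ AntidiagSet ℓ)
    (hh : h ∈ AntidiagSet ℓ) : g * h ∈ CsSet ℓ := by
  constructor <;> simp [mat_mul_apply, hg.1, hg.2, hh.1, hh.2]

def diagUnits : (ZMod ℓ)ˣ × (ZMod ℓ)ˣ →* GL2 ℓ where
  toFun p := ⟨!![(p.1 : ZMod ℓ), 0; 0, (p.2 : ZMod ℓ)],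
    !![((p.1⁻¹ : (ZMod ℓ)ˣ) : ZMod ℓ), 0; 0, ((p.2⁻¹ : (ZMod ℓ)ˣ) : ZMod ℓ)],
    by simp [one_fin_two], by simp [one_fin_two]⟩
  map_one' := by ext i j; fin_cases i <;> fin_cases j <;> simp
  map_mul' p q := by ext i j; fin_cases i <;> fin_cases j <;> simp

lemma mat_diagUnits (p : (ZMod ℓ)ˣ × (ZMod ℓ)ˣ) :
    mat (diagUnits p) = !![(p.1 : ZMod ℓ), 0; 0, (p.2 : ZMod ℓ)] := rfl

lemma diagUnits_injective : Function.Injective (diagUnits (ℓ := ℓ)) := by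
  intro p q h
  have h' := congrArg mat h
  simp only [mat_diagUnits] at h'
  ext
  · simpa using congrFun (congrFun h' 0) 0
  · simpa using congrFun (congrFun h' 1) 1

lemma diagUnits_mem_csSet (p : (ZMod ℓ)ˣ × (ZMod ℓ)ˣ) : diagUnits p ∈ CsSet ℓ := ⟨rfl, rfl⟩

lemma exists_diagUnits_eq {g : GL2 ℓ} (hg : g ∈ CsSet ℓ) : ∃ p, diagUnits p = g := by
  obtain ⟨h01, h10⟩ := hg
  have hdet : IsUnit (mat g 0 0 * mat g 1 1) := by
    have := (Matrix.GeneralLinearGroup.det g).isUnit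
    rwa [Matrix.GeneralLinearGroup.val_det_apply, det_fin_two, ← mat, h01, h10, mul_zero,
      sub_zero] at this
  refine ⟨((isUnit_of_mul_isUnit_left hdet).unit, (isUnit_of_mul_isUnit_right hdet).unit),
    Units.ext ?_⟩
  change mat (diagUnits _) = mat g
  conv_rhs => rw [eta_fin_two (mat g), h01, h10]
  rfl

def splitCartan (ℓ : ℕ) : Subgroup (GL2 ℓ) := (diagUnits (ℓ := ℓ)).range

lemma mem_splitCartan {g : GL2 ℓ} : g ∈ splitCartan ℓ ↔ g ∈ CsSet ℓ :=
  ⟨fun ⟨p, hp⟩ => hp ▸ diagUnits_mem_csSet p, exists_diagUnits_eq⟩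

lemma card_splitCartan [Fact ℓ.Prime] : Nat.card (splitCartan ℓ) = (ℓ - 1) ^ 2 := by
  rw [splitCartan, MonoidHom.range_eq_map, Subgroup.card_map_of_injective diagUnits_injective,
    Subgroup.card_top, Nat.card_prod, Nat.card_eq_fintype_card, ZMod.card_units, sq]

lemma mul_diagUnits_of_mem_antidiagSet {w : GL2 ℓ} (hw : w ∈ AntidiagSet ℓ)
    (p : (ZMod ℓ)ˣ × (ZMod ℓ)ˣ) : w * diagUnits p = diagUnits p.swap * w := by
  refine ext_mat fun i j => ?_
  fin_cases i <;> fin_cases j <;> simp [mat_mul_apply, mat_diagUnits, hw.1, hw.2, mul_comm]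

lemma conj_diagUnits_of_mem_antidiagSet {w : GL2 ℓ} (hw : w ∈ AntidiagSet ℓ)
    (p : (ZMod ℓ)ˣ × (ZMod ℓ)ˣ) : w * diagUnits p * w⁻¹ = diagUnits p.swap := by
  rw [mul_diagUnits_of_mem_antidiagSet hw, mul_inv_cancel_right]

lemma not_mem_antidiagSet_of_mem_csSet [Nontrivial (ZMod ℓ)] {g : GL2 ℓ} (hg : g ∈ CsSet ℓ) :
    g ∉ AntidiagSet ℓ := fun hA => by
  have := Matrix.GeneralLinearGroup.det_ne_zero g
  rw [det_fin_two, ← mat, hg.1, hA.1] at this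
  simp at this

lemma inv_mem_antidiagSet {g : GL2 ℓ} (hg : g ∈ AntidiagSet ℓ) : g⁻¹ ∈ AntidiagSet ℓ := by
  have hsq : (g * g)⁻¹ ∈ CsSet ℓ :=
    mem_splitCartan.1 (inv_mem (mem_splitCartan.2 (mul_mem_csSet_of_mem_antidiagSet hg hg)))
  simpa using mul_mem_antidiagSet_of_mem_antidiagSet hg hsq

lemma relIndex_splitCartan_eq_two [Nontrivial (ZMod ℓ)] {G : Subgroup (GL2 ℓ)}
    (hG : ∀ g ∈ G, g ∈ NsSet ℓ) {a : GL2 ℓ} (haG : a ∈ G) (ha : a ∈ AntidiagSet ℓ) :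
    (splitCartan ℓ).relIndex G = 2 := by
  refine Subgroup.relIndex_eq_two_iff.2 ⟨a, haG, fun b hb => ?_⟩
  simp only [mem_splitCartan]
  rcases hG b hb with hbC | hbA
  · exact Or.inr ⟨hbC, fun h =>
      not_mem_antidiagSet_of_mem_csSet h (mul_mem_antidiagSet_of_mem_csSet hbC ha)⟩
  · exact Or.inl ⟨mul_mem_csSet_of_mem_antidiagSet hbA ha,
      fun hbC => not_mem_antidiagSet_of_mem_csSet hbC hbA⟩

lemma card_inf_splitCartan_mul_relIndex [Fact ℓ.Prime] {Ns G : Subgroup (GL2 ℓ)}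
    (hNs : (Ns : Set (GL2 ℓ)) = NsSet ℓ) (hG : G ≤ Ns) {a : GL2 ℓ} (haG : a ∈ G)
    (ha : a ∈ AntidiagSet ℓ) :
    Nat.card (G ⊓ splitCartan ℓ : Subgroup (GL2 ℓ)) * G.relIndex Ns = (ℓ - 1) ^ 2 := by
  -- the tower law through `G` and through `C_s(ℓ)`, both of index 2 over the next group down
  have hmemNs : ∀ g ∈ Ns, g ∈ NsSet ℓ := fun g hg => hNs ▸ hg
  have hCNs : splitCartan ℓ ≤ Ns := fun g hg => by
    rw [← SetLike.mem_coe, hNs]; exact Or.inl (mem_splitCartan.1 hg)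
  have hG2 := relIndex_splitCartan_eq_two (fun g hg => hmemNs g (hG hg)) haG ha
  have hNs2 := relIndex_splitCartan_eq_two hmemNs (hG haG) ha
  have h1 := Subgroup.relIndex_mul_relIndex _ _ _ (inf_le_left : G ⊓ splitCartan ℓ ≤ G) hG
  have h2 := Subgroup.relIndex_mul_relIndex _ _ _ (inf_le_right : G ⊓ splitCartan ℓ ≤ _) hCNs
  have h3 := Subgroup.relIndex_mul_relIndex _ _ _ bot_le (inf_le_right : G ⊓ splitCartan ℓ ≤ _)
  rw [Subgroup.inf_relIndex_left, hG2] at h1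
  rw [hNs2, ← h1] at h2
  rw [Subgroup.relIndex_bot_left, Subgroup.relIndex_bot_left, card_splitCartan] at h3
  rw [← h3]
  congr 1
  omega

lemma diagUnits_neg_one : diagUnits ((-1, -1) : (ZMod ℓ)ˣ × (ZMod ℓ)ˣ) = -1 := by
  refine ext_mat fun i j => ?_
  fin_cases i <;> fin_cases j <;> simp [mat_diagUnits, mat_neg, mat_one]

lemma neg_mem_csSet {g : GL2 ℓ} (hg : g ∈ CsSet ℓ) : -g ∈ CsSet ℓ := by
  rw [← neg_one_mul, ← mem_splitCartan, ← diagUnits_neg_one]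
  exact mul_mem ⟨_, rfl⟩ (mem_splitCartan.2 hg)

lemma neg_one_ne_one_of_ne_two [Nontrivial (ZMod ℓ)] (hℓ : ℓ ≠ 2) : (-1 : GL2 ℓ) ≠ 1 := fun h =>
  Ring.neg_one_ne_one_of_char_ne_two (R := ZMod ℓ) (by rwa [ZMod.ringChar_zmod_n])
    (by simpa [mat_neg, mat_one] using congrArg (fun g => mat g 0 0) h)

lemma exists_mem_antidiagSet_of_not_conjSub {G : Subgroup (GL2 ℓ)} (hG : ∀ g ∈ G, g ∈ NsSet ℓ)
    (hG' : ¬ConjSub G (CsSet ℓ)) : ∃ a ∈ G, a ∈ AntidiagSet ℓ := by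
  by_contra! h
  exact hG' ⟨1, fun g hg => by simpa using (hG g hg).resolve_right (h g hg)⟩

def swapGL (ℓ : ℕ) : GL2 ℓ :=
  ⟨!![0, 1; 1, 0], !![0, 1; 1, 0], by simp [one_fin_two], by simp [one_fin_two]⟩

lemma swapGL_mem_antidiagSet : swapGL ℓ ∈ AntidiagSet ℓ := ⟨rfl, rfl⟩

lemma swapGL_mul_self : swapGL ℓ * swapGL ℓ = 1 := by
  refine ext_mat fun i j => ?_
  fin_cases i <;> fin_cases j <;> simp [swapGL, mat]

lemma mem_normalizer_map_diagUnits {S : Subgroup ((ZMod ℓ)ˣ × (ZMod ℓ)ˣ)}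
    (hS : ∀ p ∈ S, p.swap ∈ S) {w : GL2 ℓ} (hw : w ∈ AntidiagSet ℓ) :
    w ∈ Subgroup.normalizer (S.map diagUnits : Set (GL2 ℓ)) := by
  refine Subgroup.mem_normalizer_iff.2 fun g => ⟨?_, fun ⟨p, hp, hpg⟩ => ?_⟩
  · rintro ⟨p, hp, rfl⟩
    exact ⟨p.swap, hS p hp, (conj_diagUnits_of_mem_antidiagSet hw p).symm⟩
  · refine ⟨p.swap, hS p hp, ?_⟩
    rw [← conj_diagUnits_of_mem_antidiagSet (inv_mem_antidiagSet hw), hpg]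
    group

lemma exists_inf_splitCartan_eq [Nontrivial (ZMod ℓ)] {K : Subgroup (GL2 ℓ)}
    (hK : K ≤ splitCartan ℓ) {w : GL2 ℓ} (hw : w ∈ AntidiagSet ℓ)
    (hwK : w ∈ Subgroup.normalizer (K : Set (GL2 ℓ))) (hw2 : w * w ∈ K) :
    ∃ G : Subgroup (GL2 ℓ), (∀ g ∈ G, g ∈ NsSet ℓ) ∧ w ∈ G ∧ K ≤ G ∧ G ⊓ splitCartan ℓ = K := by
  obtain ⟨G, hG⟩ := Subgroup.exists_mem_iff_mem_or_inv_mul_mem hwK hw2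
  have hanti {g} (hg : w⁻¹ * g ∈ K) : g ∈ AntidiagSet ℓ := by
    simpa using mul_mem_antidiagSet_of_mem_antidiagSet hw (mem_splitCartan.1 (hK hg))
  refine ⟨G, fun g hg => ?_, (hG w).2 (Or.inr (inv_mul_cancel w ▸ K.one_mem)),
    fun g hg => (hG g).2 (Or.inl hg), le_antisymm (fun g ⟨hgG, hgC⟩ => ?_)
    (le_inf (fun g hg => (hG g).2 (Or.inl hg)) hK)⟩
  · rcases (hG g).1 hg with hg | hg
    · exact Or.inl (mem_splitCartan.1 (hK hg))
    · exact Or.inr (hanti hg)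
  · refine ((hG g).1 hgG).resolve_right fun hg => ?_
    exact not_mem_antidiagSet_of_mem_csSet (mem_splitCartan.1 hgC) (hanti hg)

lemma exists_card_inf_splitCartan_eq [Nontrivial (ZMod ℓ)]
    {S : Subgroup ((ZMod ℓ)ˣ × (ZMod ℓ)ˣ)} (hS : ∀ p ∈ S, p.swap ∈ S) {w : GL2 ℓ}
    (hw : w ∈ AntidiagSet ℓ) (hw2 : w * w ∈ S.map diagUnits) :
    ∃ G : Subgroup (GL2 ℓ), (∀ g ∈ G, g ∈ NsSet ℓ) ∧ w ∈ G ∧ S.map diagUnits ≤ G ∧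
      Nat.card (G ⊓ splitCartan ℓ : Subgroup (GL2 ℓ)) = Nat.card S := by
  obtain ⟨G, hG, hwG, hSG, hGS⟩ := exists_inf_splitCartan_eq (Subgroup.map_le_range _ _) hw
    (mem_normalizer_map_diagUnits hS hw) hw2
  exact ⟨G, hG, hwG, hSG, by rw [hGS, Subgroup.card_map_of_injective diagUnits_injective]⟩

lemma not_commute_diagUnits_of_mem_antidiagSet {w : GL2 ℓ} (hw : w ∈ AntidiagSet ℓ)
    {p : (ZMod ℓ)ˣ × (ZMod ℓ)ˣ} (hp : p.1 ≠ p.2) : ¬Commute (diagUnits p) w := fun h => by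
  rw [Commute, SemiconjBy, mul_diagUnits_of_mem_antidiagSet hw, mul_left_inj] at h
  exact hp (congrArg Prod.snd (diagUnits_injective h)).symm

lemma not_conjSub_csSet_of_not_commute {G : Subgroup (GL2 ℓ)} {g h : GL2 ℓ} (hg : g ∈ G)
    (hh : h ∈ G) (hgh : ¬Commute g h) : ¬ConjSub G (CsSet ℓ) := by
  rintro ⟨Q, hQ⟩
  obtain ⟨p, hp⟩ := exists_diagUnits_eq (hQ g hg)
  obtain ⟨q, hq⟩ := exists_diagUnits_eq (hQ h hh)
  have hcomm := ((Commute.all p q).map diagUnits).map (MulAut.conj Q⁻¹)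
  rw [hp, hq] at hcomm
  exact hgh (by simpa [MulAut.conj_apply, mul_assoc] using hcomm)

lemma not_conjSub_csSet_of_mul_self_eq_neg_one {G : Subgroup (GL2 ℓ)} {w : GL2 ℓ} (hw : w ∈ G)
    (hw2 : w * w = -1) (hsq : ¬IsSquare (-1 : ZMod ℓ)) : ¬ConjSub G (CsSet ℓ) := by
  rintro ⟨Q, hQ⟩
  obtain ⟨p, hp⟩ := exists_diagUnits_eq (hQ w hw)
  have h : diagUnits p * diagUnits p = -1 := by
    rw [hp, show Q * w * Q⁻¹ * (Q * w * Q⁻¹) = Q * (w * w) * Q⁻¹ by group, hw2]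
    simp
  refine hsq ⟨p.1, ?_⟩
  simpa [mat_mul_apply, mat_diagUnits, mat_neg, mat_one] using congrArg (fun g => mat g 0 0) h.symm

section OddPrime

variable [Fact ℓ.Prime]

lemma eq_one_or_eq_neg_one_of_card_inf_le_two {G : Subgroup (GL2 ℓ)} {a : GL2 ℓ}
    (haG : a ∈ G) (ha : a ∈ AntidiagSet ℓ)
    (hK : Nat.card (G ⊓ splitCartan ℓ : Subgroup (GL2 ℓ)) ≤ 2) {g : GL2 ℓ} (hgG : g ∈ G)
    (hg : g ∈ CsSet ℓ) : g = 1 ∨ g = -1 := by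
  set K := G ⊓ splitCartan ℓ
  obtain ⟨p, rfl⟩ := exists_diagUnits_eq hg
  have hpK : diagUnits p ∈ K := ⟨hgG, p, rfl⟩
  -- otherwise `1`, `diag(x, y)` and its conjugate `diag(y, x)` are three elements of `K`
  have hswap : p.swap = p := by
    by_contra hne
    have hswapK : diagUnits p.swap ∈ K := by
      refine Subgroup.mem_inf.2 ⟨?_, p.swap, rfl⟩
      rw [← conj_diagUnits_of_mem_antidiagSet ha p]
      exact G.mul_mem (G.mul_mem haG hgG) (G.inv_mem haG)
    have hp1 : p ≠ 1 := fun h => hne (by simp [h])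
    have hp1' : p.swap ≠ 1 := fun h => hp1 (by simpa using congrArg Prod.swap h)
    refine absurd hK (not_le.2 ?_)
    rw [show Nat.card K = (K : Set (GL2 ℓ)).ncard from Nat.card_coe_set_eq _,
      Set.two_lt_ncard_iff]
    refine ⟨1, diagUnits p, diagUnits p.swap, K.one_mem, hpK, hswapK, ?_, ?_, ?_⟩ <;>
      simp only [ne_eq, ← map_one diagUnits, diagUnits_injective.eq_iff] <;> tauto
  have hsq : p ^ 2 = 1 := by
    have hdvd : Nat.card K ∣ 2 := by
      have : 0 < Nat.card K := Nat.card_pos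
      interval_cases Nat.card K <;> norm_num
    apply diagUnits_injective
    rw [map_pow, map_one]
    exact orderOf_dvd_iff_pow_eq_one.1 ((K.orderOf_dvd_natCard hpK).trans hdvd)
  obtain ⟨x, y⟩ := p
  obtain rfl : x = y := congrArg Prod.snd hswap
  rcases Units.eq_or_eq_neg_of_sq_eq_sq x 1 (by simpa [Prod.ext_iff] using hsq) with rfl | rfl
  · exact Or.inl (map_one _)
  · exact Or.inr diagUnits_neg_one

lemma exists_conj_mem_csSet_of_isSquare (hℓ : ℓ ≠ 2) {a : GL2 ℓ} (ha : a ∈ AntidiagSet ℓ)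
    (hsq : IsSquare (mat a 0 1 * mat a 1 0)) : ∃ Q : GL2 ℓ, Q * a * Q⁻¹ ∈ CsSet ℓ := by
  obtain ⟨s, hs⟩ := hsq
  have hbc : mat a 0 1 * mat a 1 0 ≠ 0 := by
    have := Matrix.GeneralLinearGroup.det_ne_zero a
    rwa [det_fin_two, ← mat, ha.1, zero_mul, zero_sub, neg_ne_zero] at this
  have hb : mat a 0 1 ≠ 0 := left_ne_zero_of_mul hbc
  have hs0 : s ≠ 0 := by rintro rfl; exact hbc (by rw [hs, mul_zero])
  have h2 : (2 : ZMod ℓ) ≠ 0 := Ring.two_ne_zero (by rwa [ZMod.ringChar_zmod_n])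
  -- the columns of `P` are eigenvectors of `a` for the eigenvalues `s` and `-s`
  have hdet : (!![mat a 0 1, mat a 0 1; s, -s]).det ≠ 0 := by
    rw [det_fin_two_of, show mat a 0 1 * -s - mat a 0 1 * s = -(2 * mat a 0 1 * s) by ring]
    simp [h2, hb, hs0]
  let P := Matrix.GeneralLinearGroup.mkOfDetNeZero _ hdet
  let D := diagUnits (Units.mk0 s hs0, Units.mk0 (-s) (neg_ne_zero.2 hs0))
  have haP : a * P = P * D := by
    refine ext_mat fun i j => ?_
    fin_cases i <;> fin_cases j <;>
      simp [P, D, mat_mul_apply, mat_diagUnits, mat_mkOfDetNeZero, ha.1, ha.2] <;>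
      linear_combination hs
  refine ⟨P⁻¹, ?_⟩
  rw [inv_inv, mul_assoc, haP, inv_mul_cancel_left]
  exact diagUnits_mem_csSet _

lemma conjSub_csSet_of_card_inf_le_two (hℓ : ℓ ≠ 2) {G : Subgroup (GL2 ℓ)}
    (hG : ∀ g ∈ G, g ∈ NsSet ℓ) {a : GL2 ℓ} (haG : a ∈ G) (ha : a ∈ AntidiagSet ℓ)
    (hK : Nat.card (G ⊓ splitCartan ℓ : Subgroup (GL2 ℓ)) ≤ 2)
    (hsq : IsSquare (-1 : ZMod ℓ) ∨ (-1 : GL2 ℓ) ∉ G) : ConjSub G (CsSet ℓ) := by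
  have hK1 := fun {g} => eq_one_or_eq_neg_one_of_card_inf_le_two haG ha hK (g := g)
  have hbc : IsSquare (mat a 0 1 * mat a 1 0) := by
    have h00 : mat (a * a) 0 0 = mat a 0 1 * mat a 1 0 := by simp [mat_mul_apply, ha.1]
    rcases hK1 (G.mul_mem haG haG) (mul_mem_csSet_of_mem_antidiagSet ha ha) with h | h
    · exact ⟨1, by simp [← h00, h, mat_one]⟩
    · rw [← h00, h, mat_neg, mat_one]
      simpa using hsq.resolve_right (not_not.2 (h ▸ G.mul_mem haG haG))
  obtain ⟨Q, hQ⟩ := exists_conj_mem_csSet_of_isSquare hℓ ha hbc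
  refine ⟨Q, fun g hg => ?_⟩
  rcases hG g hg with hgC | hgA
  · rcases hK1 hg hgC with rfl | rfl
    · simpa using hgC
    · simpa using hgC
  · rcases hK1 (G.mul_mem (G.inv_mem haG) hg)
      (mul_mem_csSet_of_mem_antidiagSet (inv_mem_antidiagSet ha) hgA) with h | h
    · rwa [← eq_of_inv_mul_eq_one h]
    · rw [← mul_inv_cancel_left a g, h, mul_neg_one, mul_neg, neg_mul]
      exact neg_mem_csSet hQ

lemma card_inf_splitCartan_of_not_conjSub (hℓ : ℓ ≠ 2) {G : Subgroup (GL2 ℓ)}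
    (hG : ∀ g ∈ G, g ∈ NsSet ℓ) {a : GL2 ℓ} (haG : a ∈ G) (ha : a ∈ AntidiagSet ℓ)
    (hG' : ¬ConjSub G (CsSet ℓ)) :
    2 ≤ Nat.card (G ⊓ splitCartan ℓ : Subgroup (GL2 ℓ)) ∧
      (Nat.card (G ⊓ splitCartan ℓ : Subgroup (GL2 ℓ)) = 2 → ¬4 ∣ ℓ - 1) := by
  refine ⟨?_, fun hd h4 => hG' (conjSub_csSet_of_card_inf_le_two hℓ hG haG ha hd.le
    (Or.inl (ZMod.exists_sq_eq_neg_one_iff.2 (by have := (Fact.out : ℓ.Prime).two_le; omega))))⟩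
  by_contra! hd
  refine hG' (conjSub_csSet_of_card_inf_le_two hℓ hG haG ha hd.le (Or.inr fun hneg => ?_))
  have hbot := (Subgroup.card_le_one_iff_eq_bot _).1 (Nat.le_of_lt_succ hd)
  have : (-1 : GL2 ℓ) ∈ G ⊓ splitCartan ℓ :=
    ⟨hneg, mem_splitCartan.2 (by simpa using neg_mem_csSet (diagUnits_mem_csSet 1))⟩
  rw [hbot, Subgroup.mem_bot] at this
  exact neg_one_ne_one_of_ne_two hℓ this

lemma exists_not_conjSub_card_inf_splitCartan_eq_two (hℓ : ℓ ≠ 2)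
    (hsq : ¬IsSquare (-1 : ZMod ℓ)) :
    ∃ G : Subgroup (GL2 ℓ), (∀ g ∈ G, g ∈ NsSet ℓ) ∧ ¬ConjSub G (CsSet ℓ) ∧
      Nat.card (G ⊓ splitCartan ℓ : Subgroup (GL2 ℓ)) = 2 := by
  have hneg : (-1 : (ZMod ℓ)ˣ) ≠ 1 := fun h => neg_one_ne_one_of_ne_two hℓ (by
    rw [← diagUnits_neg_one, ← map_one diagUnits]
    exact congrArg diagUnits (Prod.ext h h))
  obtain ⟨S, hS, hcard, hA, -⟩ :=
    exists_swap_mem_subgroup_prod (bot_le : ⊥ ≤ Subgroup.zpowers (-1 : (ZMod ℓ)ˣ))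
  -- `w = !![0, 1; -1, 0]`
  set w := diagUnits (1, -1) * swapGL ℓ
  have hw : w ∈ AntidiagSet ℓ :=
    mul_mem_antidiagSet_of_mem_csSet (diagUnits_mem_csSet _) swapGL_mem_antidiagSet
  have hw2 : w * w = -1 := by
    rw [mul_assoc, ← mul_assoc (swapGL ℓ), mul_diagUnits_of_mem_antidiagSet swapGL_mem_antidiagSet,
      mul_assoc, swapGL_mul_self, mul_one, ← map_mul, ← diagUnits_neg_one]
    simp
  obtain ⟨G, hG, hwG, -, hGS⟩ := exists_card_inf_splitCartan_eq hS hw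
    (hw2 ▸ ⟨(-1, -1), by simpa using hA (-1) (Subgroup.mem_zpowers _), diagUnits_neg_one⟩)
  refine ⟨G, hG, not_conjSub_csSet_of_mul_self_eq_neg_one hwG hw2 hsq, ?_⟩
  rw [hGS, hcard, Nat.card_zpowers, Subgroup.card_bot, mul_one]
  exact orderOf_eq_prime (by simp) hneg

lemma exists_not_conjSub_card_inf_splitCartan_eq_of_two_lt {d : ℕ} (hd : d ∣ (ℓ - 1) ^ 2)
    (hd3 : 2 < d) :
    ∃ G : Subgroup (GL2 ℓ), (∀ g ∈ G, g ∈ NsSet ℓ) ∧ ¬ConjSub G (CsSet ℓ) ∧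
      Nat.card (G ⊓ splitCartan ℓ : Subgroup (GL2 ℓ)) = d := by
  obtain ⟨u, v, rfl, hvu, hu⟩ := Nat.exists_mul_eq_dvd_dvd_of_dvd_sq hd
  have hunits : Nat.card (ZMod ℓ)ˣ = ℓ - 1 := by rw [Nat.card_eq_fintype_card, ZMod.card_units]
  obtain ⟨a, ha⟩ := IsCyclic.exists_orderOf_eq_of_dvd (hunits ▸ hu)
  have hu0 : u ≠ 0 := by rintro rfl; simp at hd3
  obtain ⟨b, hbA, hb⟩ : ∃ b ∈ Subgroup.zpowers a, orderOf b = v :=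
    ⟨_, pow_mem (Subgroup.mem_zpowers a) _, ha ▸ orderOf_pow_orderOf_div (ha ▸ hu0) (ha ▸ hvu)⟩
  obtain ⟨S, hS, hcard, hA, hB⟩ := exists_swap_mem_subgroup_prod (Subgroup.zpowers_le.2 hbA)
  obtain ⟨G, hG, hwG, hSG, hGS⟩ := exists_card_inf_splitCartan_eq hS swapGL_mem_antidiagSet
    (swapGL_mul_self (ℓ := ℓ) ▸ one_mem _)
  refine ⟨G, hG, ?_, by rw [hGS, hcard, Nat.card_zpowers, Nat.card_zpowers, ha, hb]⟩
  obtain ⟨p, hpS, hp⟩ : ∃ p ∈ S, p.1 ≠ p.2 := by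
    by_cases hv : v = 1
    · refine ⟨(a, a⁻¹), hA a (Subgroup.mem_zpowers a), fun (h : a = a⁻¹) => ?_⟩
      have := orderOf_le_of_pow_eq_one two_pos (x := a) (by rw [sq, mul_eq_one_iff_eq_inv, ← h])
      rw [ha] at this
      rw [hv, mul_one] at hd3
      omega
    · exact ⟨(1, b), hB b (Subgroup.mem_zpowers b),
        fun (h : 1 = b) => hv (by rw [← hb, ← h, orderOf_one])⟩
  exact not_conjSub_csSet_of_not_commute (hSG ⟨p, hpS, rfl⟩) hwG
    (not_commute_diagUnits_of_mem_antidiagSet swapGL_mem_antidiagSet hp)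

lemma exists_not_conjSub_card_inf_splitCartan_eq (hℓ : ℓ ≠ 2) {d : ℕ} (hd : d ∣ (ℓ - 1) ^ 2)
    (hd2 : 2 ≤ d) (hd4 : d = 2 → ¬4 ∣ ℓ - 1) :
    ∃ G : Subgroup (GL2 ℓ), (∀ g ∈ G, g ∈ NsSet ℓ) ∧ ¬ConjSub G (CsSet ℓ) ∧
      Nat.card (G ⊓ splitCartan ℓ : Subgroup (GL2 ℓ)) = d := by
  rcases eq_or_lt_of_le hd2 with rfl | hd3
  · refine exists_not_conjSub_card_inf_splitCartan_eq_two hℓ ?_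
    have := (Fact.out : ℓ.Prime).eq_two_or_odd
    have := hd4 rfl
    rw [ZMod.exists_sq_eq_neg_one_iff]
    omega
  · exact exists_not_conjSub_card_inf_splitCartan_eq_of_two_lt hd hd3

end OddPrime

end Paper

theorem statement_11 (ℓ : ℕ) (hℓ : Nat.Prime ℓ) (hodd : Odd ℓ)
    (Ns : Subgroup (GL2 ℓ)) (hNs : (Ns : Set (GL2 ℓ)) = Paper.NsSet ℓ) :
    { n : ℕ | ∃ G : Subgroup (GL2 ℓ), G ≤ Ns ∧ Paper.BelongsNs G ∧ G.relIndex Ns = n } =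
      { n : ℕ | 0 < n ∧
        ∃ m : ℕ,
          ((∃ q : ℕ, q.Prime ∧ Odd q ∧ q ∣ (ℓ - 1) ∧ m = (ℓ - 1) ^ 2 / q) ∨
            m = (ℓ - 1) ^ 2 / (if 4 ∣ ℓ - 1 then 4 else 2)) ∧ n ∣ m } := by
  open Paper in
  have : Fact ℓ.Prime := ⟨hℓ⟩
  have hℓ2 : ℓ ≠ 2 := by rintro rfl; exact absurd hodd (by decide)
  have hGNs {G : Subgroup (GL2 ℓ)} : G ≤ Ns ↔ ∀ g ∈ G, g ∈ NsSet ℓ := by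
    simp only [← hNs, SetLike.mem_coe, SetLike.le_def]
  ext n
  refine Iff.trans ?_ (Nat.pos_dvd_sq_div_iff_exists_mul_eq_sq (Nat.Odd.sub_odd hodd odd_one)
    (by have := hℓ.two_le; omega)).symm
  constructor
  · rintro ⟨G, hG, ⟨-, hG'⟩, rfl⟩
    obtain ⟨a, haG, ha⟩ := exists_mem_antidiagSet_of_not_conjSub (hGNs.1 hG) hG'
    exact ⟨_, (mul_comm _ _).trans (card_inf_splitCartan_mul_relIndex hNs hG haG ha),
      card_inf_splitCartan_of_not_conjSub hℓ2 (hGNs.1 hG) haG ha hG'⟩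
  · rintro ⟨d, hnd, hd2, hd4⟩
    obtain ⟨G, hG, hG', hd⟩ :=
      exists_not_conjSub_card_inf_splitCartan_eq hℓ2 (Dvd.intro_left n hnd) hd2 hd4
    obtain ⟨a, haG, ha⟩ := exists_mem_antidiagSet_of_not_conjSub hG hG'
    refine ⟨G, hGNs.2 hG, ⟨⟨1, fun g hg => by simpa using hG g hg⟩, hG'⟩, ?_⟩
    have hindex := card_inf_splitCartan_mul_relIndex hNs (hGNs.2 hG) haG ha
    rw [hd, ← hnd, mul_comm n] at hindex
    exact Nat.eq_of_mul_eq_mul_left (by omega) hindex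
end

section
/- Let ℓ be an odd prime. The set of indices [N_s(ℓ) : G] over subgroups G of N_s(ℓ) that belong to the normalizer N_ns(ℓ) of the nonsplit Cartan equals the set of positive integers divisible by (ℓ−1)/2 and dividing (ℓ−1)². -/
open Matrix

/-!
Let `G ≤ N_s(ℓ)` belong to `N_ns(ℓ)`. A diagonal matrix has discriminant `(a - b)²`, a square,
while an element `[[x, εy], [y, x]]` of `C_ns(ℓ)` has discriminant `ε (2y)²` and the elements of
the other coset of `N_ns(ℓ)` have trace `0`. Since the discriminant and the trace are conjugation
invariant, the diagonal part of `G` consists of matrices `diag(c, ±c)`, so `|G|` divides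
`2 · 2(ℓ - 1)`. Moreover `|G|` is even: an element of `N_ns(ℓ) \ C_ns(ℓ)` squares to a scalar, so
if it had odd order it would be a power of that scalar.

Conversely, let `k ∣ 2(ℓ - 1)`. If `k ∣ ℓ - 1`, the scalars of order dividing `k` together with
`diag(1, -1)` form a group of order `2k`. Otherwise `k = 2r` with `ℓ - 1 = r t`, `r` even and `t`
odd, and we adjoin in addition an antidiagonal `[[0, -εc], [c, 0]]` whose square `-εc²` has order
dividing `r`. These groups lie in `N_s(ℓ) ∩ N_ns(ℓ)` and contain `diag(1, -1)`, which is not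
conjugate into `C_ns(ℓ)` (its discriminant `4` is a nonzero square). As `|N_s(ℓ)| = 2(ℓ - 1)²`,
a subgroup of order `2k` has index `(ℓ - 1)² / k`.
-/

namespace Subgroup

variable {Γ : Type*} [Group Γ]

def ofMulMem [Finite Γ] (S : Set Γ) (one_mem : (1 : Γ) ∈ S)
    (mul_mem : ∀ {x y}, x ∈ S → y ∈ S → x * y ∈ S) : Subgroup Γ :=
  let M : Submonoid Γ := ⟨⟨S, mul_mem⟩, one_mem⟩
  { M with
    inv_mem' := fun {x} hx =>
      Submonoid.powers_le.mpr (show x ∈ M from hx)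
        (mem_powers_iff_mem_zpowers.mpr (inv_mem (mem_zpowers x))) }

def extension (A : Subgroup Γ) (t : Γ) (hsq : t * t ∈ A)
    (hconj : ∀ a ∈ A, t * a * t⁻¹ ∈ A) : Subgroup Γ where
  carrier := {x | x ∈ A ∨ ∃ a ∈ A, x = a * t}
  one_mem' := Or.inl A.one_mem
  mul_mem' := by
    rintro x y (hx | ⟨a, ha, rfl⟩) (hy | ⟨b, hb, rfl⟩)
    · exact Or.inl (A.mul_mem hx hy)
    · exact Or.inr ⟨x * b, A.mul_mem hx hb, by group⟩
    · exact Or.inr ⟨a * (t * y * t⁻¹), A.mul_mem ha (hconj y hy), by group⟩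
    · refine Or.inl ?_
      rw [show a * t * (b * t) = a * (t * b * t⁻¹) * (t * t) by group]
      exact A.mul_mem (A.mul_mem ha (hconj b hb)) hsq
  inv_mem' := by
    rintro x (hx | ⟨a, ha, rfl⟩)
    · exact Or.inl (A.inv_mem hx)
    · refine Or.inr ⟨t * ((t * t)⁻¹ * a⁻¹) * t⁻¹, hconj _ ?_, by group⟩
      exact A.mul_mem (A.inv_mem hsq) (A.inv_mem ha)

section Extension

variable {A : Subgroup Γ} {t : Γ} {hsq : t * t ∈ A} {hconj : ∀ a ∈ A, t * a * t⁻¹ ∈ A}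

lemma mem_extension {x : Γ} :
    x ∈ A.extension t hsq hconj ↔ x ∈ A ∨ ∃ a ∈ A, x = a * t := Iff.rfl

lemma le_extension : A ≤ A.extension t hsq hconj := fun _ => Or.inl

lemma mem_extension_self : t ∈ A.extension t hsq hconj :=
  Or.inr ⟨1, A.one_mem, (one_mul t).symm⟩

lemma extension_le {K : Subgroup Γ} (hA : A ≤ K) (ht : t ∈ K) :
    A.extension t hsq hconj ≤ K := by
  rintro x (hx | ⟨a, ha, rfl⟩)
  exacts [hA hx, K.mul_mem (hA ha) ht]

lemma card_extension [Finite Γ] (ht : t ∉ A) :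
    Nat.card (A.extension t hsq hconj) = 2 * Nat.card A := by
  have hdisj : Disjoint (A : Set Γ) ((· * t) '' A) := by
    refine Set.disjoint_left.mpr ?_
    rintro _ hx ⟨a, ha, rfl⟩
    exact ht (by simpa using A.mul_mem (A.inv_mem ha) hx)
  have hcarrier :
      ((A.extension t hsq hconj : Subgroup Γ) : Set Γ) = (A : Set Γ) ∪ (· * t) '' A := by
    ext x
    simp only [SetLike.mem_coe, mem_extension, Set.mem_union, Set.mem_image]
    exact or_congr_right ⟨fun ⟨a, ha, h⟩ => ⟨a, ha, h.symm⟩, fun ⟨a, ha, h⟩ => ⟨a, ha, h.symm⟩⟩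
  rw [← SetLike.coe_sort_coe, hcarrier, Nat.card_coe_set_eq, Set.ncard_union_eq hdisj,
    Set.ncard_image_of_injective _ (mul_left_injective t), ← Nat.card_coe_set_eq, two_mul]
  rfl

end Extension

lemma card_mul_relIndex {H K : Subgroup Γ} (h : H ≤ K) :
    Nat.card H * H.relIndex K = Nat.card K := by
  rw [← relIndex_bot_left, relIndex_mul_relIndex _ _ _ bot_le h, relIndex_bot_left]

end Subgroup

lemma eq_zero_of_sq_eq_mul_sq {K : Type*} [Field K] {ε a b : K} (hε : ∀ t : K, t ^ 2 ≠ ε)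
    (h : a ^ 2 = ε * b ^ 2) : b = 0 := by
  by_contra hb
  exact hε (a / b) (by rw [div_pow, h]; field_simp)

lemma exists_even_mul_odd_of_dvd_two_mul {k n : ℕ} (hn : Even n) (hk : k ∣ 2 * n)
    (hkn : ¬ k ∣ n) : ∃ r t, k = 2 * r ∧ n = r * t ∧ Even r ∧ Odd t := by
  obtain ⟨t, ht⟩ := hk
  have htodd : Odd t := by
    refine Nat.not_even_iff_odd.mp fun ⟨s, hs⟩ => hkn ⟨s, ?_⟩
    rw [hs] at ht
    linarith
  obtain ⟨r, rfl⟩ : 2 ∣ k := (Nat.prime_two.dvd_mul.mp ⟨n, ht.symm⟩).resolve_right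
    (fun h => Nat.not_even_iff_odd.mpr htodd (even_iff_two_dvd.mpr h))
  have hn' : n = r * t := by linarith
  refine ⟨r, t, rfl, hn', ?_, htodd⟩
  rw [hn', Nat.even_mul] at hn
  exact hn.resolve_right (Nat.not_even_iff_odd.mpr htodd)

lemma pos_and_half_dvd_and_dvd_sq_iff {n m : ℕ} (hn : Even n) (hn0 : 0 < n) :
    (0 < m ∧ n / 2 ∣ m ∧ m ∣ n ^ 2) ↔ ∃ k, k ∣ 2 * n ∧ m * k = n ^ 2 := by
  obtain ⟨q, rfl⟩ := hn
  have hq0 : 0 < q := by omega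
  rw [show (q + q) / 2 = q by omega]
  constructor
  · rintro ⟨-, ⟨e, rfl⟩, ⟨k, hk⟩⟩
    refine ⟨k, ⟨e, Nat.eq_of_mul_eq_mul_left hq0 ?_⟩, hk.symm⟩
    linarith
  · rintro ⟨k, ⟨f, hf⟩, hmk⟩
    have hsq : 0 < (q + q) ^ 2 := by positivity
    have hk0 : 0 < k := Nat.pos_of_ne_zero (by rintro rfl; rw [mul_zero] at hmk; omega)
    refine ⟨Nat.pos_of_ne_zero (by rintro rfl; rw [zero_mul] at hmk; omega),
      ⟨f, Nat.eq_of_mul_eq_mul_right hk0 ?_⟩, ⟨k, hmk.symm⟩⟩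
    nlinarith

namespace NsIndex

open Paper

variable {ℓ : ℕ}

@[simp] lemma mat_eq_coe (g : GL2 ℓ) : mat g = (g : Matrix (Fin 2) (Fin 2) (ZMod ℓ)) := rfl

lemma discr_mat_conj (a g : GL2 ℓ) : (mat (a * g * a⁻¹)).discr = (mat g).discr := by
  simp [Matrix.coe_units_inv]

lemma trace_mat_conj (a g : GL2 ℓ) : (mat (a * g * a⁻¹)).trace = (mat g).trace := by
  simpa using Matrix.trace_units_conj a (mat g)

lemma coe_scalar (u : (ZMod ℓ)ˣ) :
    ((GeneralLinearGroup.scalar (Fin 2) u : GL2 ℓ) : Matrix (Fin 2) (Fin 2) (ZMod ℓ)) =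
      !![(u : ZMod ℓ), 0; 0, u] := by
  ext i j; fin_cases i <;> fin_cases j <;> simp

lemma mem_range_scalar_of_coe_eq_smul {g : GL2 ℓ} {s : ZMod ℓ}
    (h : (g : Matrix (Fin 2) (Fin 2) (ZMod ℓ)) = s • 1) :
    g ∈ (GeneralLinearGroup.scalar (Fin 2)).range := by
  rw [← GeneralLinearGroup.center_eq_range_scalar, Subgroup.mem_center_iff]
  intro x
  ext1
  simp [h]

lemma scalar_injective :
    Function.Injective (GeneralLinearGroup.scalar (Fin 2) : (ZMod ℓ)ˣ →* GL2 ℓ) :=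
  fun _ _ h => Units.ext (Matrix.scalar_inj.mp (congrArg Units.val h))

lemma conj_scalar (t : GL2 ℓ) (u : (ZMod ℓ)ˣ) :
    t * GeneralLinearGroup.scalar (Fin 2) u * t⁻¹ = GeneralLinearGroup.scalar (Fin 2) u := by
  rw [← GeneralLinearGroup.scalar_commute, mul_inv_cancel_right]

variable {ε : ZMod ℓ}

lemma discr_cns (x y : ZMod ℓ) : (!![x, ε * y; y, x]).discr = ε * (2 * y) ^ 2 := by
  simp [Matrix.discr_fin_two, Matrix.trace_fin_two, Matrix.det_fin_two]; ring

lemma scalar_mem_cnsSet (u : (ZMod ℓ)ˣ) : GeneralLinearGroup.scalar (Fin 2) u ∈ CnsSet ℓ ε :=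
  ⟨u, 0, by rw [mat_eq_coe, coe_scalar, mul_zero]⟩

lemma mul_mem_nnsSet {g g' : GL2 ℓ} (hg : g ∈ NnsSet ℓ ε) (hg' : g' ∈ NnsSet ℓ ε) :
    g * g' ∈ NnsSet ℓ ε := by
  rcases hg with ⟨x, y, hg⟩ | ⟨x, y, hg⟩ <;> rcases hg' with ⟨x', y', hg'⟩ | ⟨x', y', hg'⟩
  · refine Or.inl ⟨x * x' + ε * y * y', x * y' + y * x', ?_⟩
    ext i j; fin_cases i <;> fin_cases j <;> simp_all [Matrix.mul_apply] <;> ring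
  · refine Or.inr ⟨x * x' + ε * y * y', x * y' + y * x', ?_⟩
    ext i j; fin_cases i <;> fin_cases j <;> simp_all [Matrix.mul_apply] <;> ring
  · refine Or.inr ⟨x * x' - ε * y * y', y * x' - x * y', ?_⟩
    ext i j; fin_cases i <;> fin_cases j <;> simp_all [Matrix.mul_apply] <;> ring
  · refine Or.inl ⟨x * x' - ε * y * y', y * x' - x * y', ?_⟩
    ext i j; fin_cases i <;> fin_cases j <;> simp_all [Matrix.mul_apply] <;> ring

lemma two_dvd_card_of_belongsNns {G : Subgroup (GL2 ℓ)} (hG : BelongsNns ε G) :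
    2 ∣ Nat.card G := by
  obtain ⟨⟨a, ha⟩, hnot⟩ := hG
  obtain ⟨g, hg, hgc⟩ : ∃ g ∈ G, a * g * a⁻¹ ∉ CnsSet ℓ ε := by
    by_contra! h
    exact hnot ⟨a, h⟩
  obtain ⟨x, y, hxy⟩ := (ha g hg).resolve_left hgc
  have hsq : (a * g * a⁻¹) ^ 2 ∈ (GeneralLinearGroup.scalar (Fin 2)).range := by
    refine mem_range_scalar_of_coe_eq_smul (s := x ^ 2 - ε * y ^ 2) ?_
    rw [sq, Units.val_mul, ← mat_eq_coe, hxy]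
    ext i j; fin_cases i <;> fin_cases j <;> simp [Matrix.mul_apply] <;> ring
  have heven : ¬ Odd (orderOf (a * g * a⁻¹)) := fun hodd => by
    obtain ⟨k, hk⟩ := exists_pow_eq_self_of_coprime (Nat.coprime_two_left.mpr hodd)
    obtain ⟨u, hu⟩ := pow_mem hsq k
    exact hgc (hk ▸ hu ▸ scalar_mem_cnsSet u)
  rw [← MulAut.conj_apply, MulEquiv.orderOf_eq, Nat.not_odd_iff_even, even_iff_two_dvd] at heven
  exact heven.trans (Subgroup.orderOf_dvd_natCard G hg)

section Prime

variable [Fact ℓ.Prime]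

lemma two_ne_zero_of_ne_two (hℓ : ℓ ≠ 2) : (2 : ZMod ℓ) ≠ 0 :=
  Ring.two_ne_zero (by rwa [ZMod.ringChar_zmod_n])

def diagHom : (ZMod ℓ)ˣ × (ZMod ℓ)ˣ →* GL2 ℓ where
  toFun p := GeneralLinearGroup.mkOfDetNeZero !![(p.1 : ZMod ℓ), 0; 0, p.2] (by simp)
  map_one' := by ext i j; fin_cases i <;> fin_cases j <;> simp
  map_mul' p q := by ext i j; fin_cases i <;> fin_cases j <;> simp [Matrix.mul_apply]

def antidiag (a b : (ZMod ℓ)ˣ) : GL2 ℓ :=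
  GeneralLinearGroup.mkOfDetNeZero !![0, (a : ZMod ℓ); b, 0] (by simp)

lemma coe_diagHom (a b : (ZMod ℓ)ˣ) :
    (diagHom (a, b) : Matrix (Fin 2) (Fin 2) (ZMod ℓ)) = !![(a : ZMod ℓ), 0; 0, b] := rfl

lemma coe_antidiag (a b : (ZMod ℓ)ˣ) :
    (antidiag a b : Matrix (Fin 2) (Fin 2) (ZMod ℓ)) = !![0, (a : ZMod ℓ); b, 0] := rfl

lemma diagHom_injective : Function.Injective (diagHom (ℓ := ℓ)) := by
  rintro ⟨a, b⟩ ⟨a', b'⟩ h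
  have h00 := congrArg (fun g : GL2 ℓ => (g : Matrix (Fin 2) (Fin 2) (ZMod ℓ)) 0 0) h
  have h11 := congrArg (fun g : GL2 ℓ => (g : Matrix (Fin 2) (Fin 2) (ZMod ℓ)) 1 1) h
  simp only [coe_diagHom] at h00 h11
  simp_all [Units.ext_iff]

lemma antidiag_mul_self (a b : (ZMod ℓ)ˣ) :
    antidiag a b * antidiag a b = GeneralLinearGroup.scalar (Fin 2) (a * b) := by
  ext i j; fin_cases i <;> fin_cases j <;> simp [coe_antidiag, Matrix.mul_apply, mul_comm]

lemma antidiag_one_conj_diagHom (a b : (ZMod ℓ)ˣ) :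
    antidiag 1 1 * diagHom (a, b) * (antidiag 1 1)⁻¹ = diagHom (b, a) := by
  rw [mul_inv_eq_iff_eq_mul]
  ext i j; fin_cases i <;> fin_cases j <;> simp [coe_antidiag, coe_diagHom, Matrix.mul_apply]

variable (ℓ) in
def diagSubgroup : Subgroup (GL2 ℓ) := diagHom.range

lemma mem_diagSubgroup {g : GL2 ℓ} : g ∈ diagSubgroup ℓ ↔ g ∈ CsSet ℓ := by
  constructor
  · rintro ⟨⟨a, b⟩, rfl⟩
    simp [CsSet, coe_diagHom]
  · rintro ⟨h01, h10⟩
    have hdet : (mat g).det ≠ 0 := g.det_ne_zero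
    rw [Matrix.det_fin_two, h01, h10, mul_zero, sub_zero] at hdet
    refine ⟨(Units.mk0 _ (left_ne_zero_of_mul hdet), Units.mk0 _ (right_ne_zero_of_mul hdet)), ?_⟩
    ext i j; fin_cases i <;> fin_cases j <;> simp_all [coe_diagHom]

lemma card_diagSubgroup : Nat.card (diagSubgroup ℓ) = (ℓ - 1) ^ 2 := by
  rw [diagSubgroup, ← Nat.card_congr (MonoidHom.ofInjective diagHom_injective).toEquiv,
    Nat.card_prod, Nat.card_eq_fintype_card, ZMod.card_units, sq]

lemma scalar_le_diagSubgroup : (GeneralLinearGroup.scalar (Fin 2)).range ≤ diagSubgroup ℓ := by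
  rintro _ ⟨u, rfl⟩
  refine ⟨(u, u), ?_⟩
  ext1
  rw [coe_diagHom, coe_scalar]

variable (ℓ) in
def diagOneNegOne : GL2 ℓ := diagHom (1, -1)

lemma diagOneNegOne_mul_self : diagOneNegOne ℓ * diagOneNegOne ℓ = 1 := by
  rw [diagOneNegOne, ← map_mul, Prod.mk_mul_mk, mul_one, neg_one_mul, neg_neg, Prod.mk_one_one,
    map_one]

lemma diagOneNegOne_notMem_range_scalar (hℓ : ℓ ≠ 2) :
    diagOneNegOne ℓ ∉ (GeneralLinearGroup.scalar (Fin 2)).range := by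
  rintro ⟨u, hu⟩
  have h := congrArg (fun g : GL2 ℓ => (g : Matrix (Fin 2) (Fin 2) (ZMod ℓ)) 0 0 - g 1 1) hu
  simp [diagOneNegOne, coe_diagHom] at h
  exact two_ne_zero_of_ne_two hℓ (by linear_combination -h)

lemma antidiag_conj_diagOneNegOne (a b : (ZMod ℓ)ˣ) :
    antidiag a b * diagOneNegOne ℓ * (antidiag a b)⁻¹ =
      GeneralLinearGroup.scalar (Fin 2) (-1) * diagOneNegOne ℓ := by
  rw [mul_inv_eq_iff_eq_mul]
  ext i j; fin_cases i <;> fin_cases j <;>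
    simp [coe_antidiag, coe_diagHom, diagOneNegOne, Matrix.mul_apply]

lemma not_conjSub_cnsSet (hℓ : ℓ ≠ 2) (hε : ∀ t : ZMod ℓ, t ^ 2 ≠ ε) {G : Subgroup (GL2 ℓ)}
    (hd : diagOneNegOne ℓ ∈ G) : ¬ ConjSub G (CnsSet ℓ ε) := by
  rintro ⟨a, ha⟩
  obtain ⟨x, y, hxy⟩ := ha _ hd
  have h := discr_mat_conj a (diagOneNegOne ℓ)
  rw [hxy, discr_cns] at h
  have h' : (2 : ZMod ℓ) ^ 2 = ε * (2 * y) ^ 2 := by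
    rw [h]; simp [diagOneNegOne, coe_diagHom, Matrix.discr_fin_two, Matrix.trace_fin_two,
      Matrix.det_fin_two]; ring
  rw [eq_zero_of_sq_eq_mul_sq hε h', zero_pow two_ne_zero, mul_zero] at h'
  exact two_ne_zero_of_ne_two hℓ (pow_eq_zero_iff two_ne_zero |>.mp h')

def scalars (S : Subgroup (ZMod ℓ)ˣ) : Subgroup (GL2 ℓ) :=
  S.map (GeneralLinearGroup.scalar (Fin 2))

/-- The matrices `diag(u, ±u)` with `u ∈ S`. -/
def pmScalars (S : Subgroup (ZMod ℓ)ˣ) : Subgroup (GL2 ℓ) :=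
  (scalars S).extension (diagOneNegOne ℓ) (by rw [diagOneNegOne_mul_self]; exact one_mem _)
    (by rintro _ ⟨u, hu, rfl⟩; rw [conj_scalar]; exact ⟨u, hu, rfl⟩)

section PmScalars

variable {S : Subgroup (ZMod ℓ)ˣ}

lemma mem_pmScalars {x : GL2 ℓ} : x ∈ pmScalars S ↔
    (∃ u ∈ S, GeneralLinearGroup.scalar (Fin 2) u = x) ∨
      ∃ u ∈ S, x = GeneralLinearGroup.scalar (Fin 2) u * diagOneNegOne ℓ := by
  simp only [pmScalars, Subgroup.mem_extension, scalars, Subgroup.mem_map]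
  constructor
  · rintro (h | ⟨_, ⟨u, hu, rfl⟩, rfl⟩)
    exacts [Or.inl h, Or.inr ⟨u, hu, rfl⟩]
  · rintro (h | ⟨u, hu, rfl⟩)
    exacts [Or.inl h, Or.inr ⟨_, ⟨u, hu, rfl⟩, rfl⟩]

lemma diagOneNegOne_mem_pmScalars : diagOneNegOne ℓ ∈ pmScalars S :=
  Subgroup.mem_extension_self

lemma card_pmScalars (hℓ : ℓ ≠ 2) : Nat.card (pmScalars S) = 2 * Nat.card S := by
  rw [pmScalars, Subgroup.card_extension, scalars, Subgroup.card_map_of_injective scalar_injective]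
  exact fun h => diagOneNegOne_notMem_range_scalar hℓ (Subgroup.map_le_range _ _ h)

lemma pmScalars_le {K : Subgroup (GL2 ℓ)} (hK : (GeneralLinearGroup.scalar (Fin 2)).range ≤ K)
    (hd : diagOneNegOne ℓ ∈ K) : pmScalars S ≤ K :=
  Subgroup.extension_le ((Subgroup.map_le_range _ _).trans hK) hd

lemma pmScalars_le_diagSubgroup : pmScalars S ≤ diagSubgroup ℓ :=
  pmScalars_le scalar_le_diagSubgroup ⟨_, rfl⟩

lemma conj_mem_pmScalars {t : GL2 ℓ}
    (ht : t * diagOneNegOne ℓ * t⁻¹ = GeneralLinearGroup.scalar (Fin 2) (-1) * diagOneNegOne ℓ)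
    (hS : -1 ∈ S) : ∀ a ∈ pmScalars S, t * a * t⁻¹ ∈ pmScalars S := by
  intro a ha
  rcases mem_pmScalars.mp ha with ⟨u, hu, rfl⟩ | ⟨u, hu, rfl⟩
  · rw [conj_scalar]
    exact mem_pmScalars.mpr (Or.inl ⟨u, hu, rfl⟩)
  · rw [show t * (GeneralLinearGroup.scalar (Fin 2) u * diagOneNegOne ℓ) * t⁻¹ =
        t * GeneralLinearGroup.scalar (Fin 2) u * t⁻¹ * (t * diagOneNegOne ℓ * t⁻¹) by group,
      conj_scalar, ht, ← mul_assoc, ← map_mul]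
    exact mem_pmScalars.mpr (Or.inr ⟨_, mul_mem hu hS, rfl⟩)

lemma mem_pmScalars_of_conj_mem_nnsSet (hε : ∀ t : ZMod ℓ, t ^ 2 ≠ ε) {a g : GL2 ℓ}
    (hg : g ∈ diagSubgroup ℓ) (hconj : a * g * a⁻¹ ∈ NnsSet ℓ ε) : g ∈ pmScalars ⊤ := by
  obtain ⟨⟨u, v⟩, rfl⟩ := hg
  rw [mem_pmScalars]
  rcases hconj with ⟨x, y, h⟩ | ⟨x, y, h⟩
  · have hd := discr_mat_conj a (diagHom (u, v))
    rw [h, discr_cns, mat_eq_coe, coe_diagHom] at hd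
    have hd' : ((u : ZMod ℓ) - v) ^ 2 = ε * (2 * y) ^ 2 := by
      rw [hd]; simp [Matrix.discr_fin_two, Matrix.trace_fin_two, Matrix.det_fin_two]; ring
    rw [eq_zero_of_sq_eq_mul_sq hε hd', zero_pow two_ne_zero, mul_zero,
      pow_eq_zero_iff two_ne_zero, sub_eq_zero] at hd'
    refine Or.inl ⟨u, trivial, ?_⟩
    ext1; rw [coe_scalar, coe_diagHom, hd']
  · have ht := trace_mat_conj a (diagHom (u, v))
    rw [h, mat_eq_coe, coe_diagHom] at ht
    have hv : (v : ZMod ℓ) = -u := by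
      simpa [Matrix.trace_fin_two, eq_neg_iff_add_eq_zero, add_comm] using ht.symm
    refine Or.inr ⟨u, trivial, ?_⟩
    ext i j; fin_cases i <;> fin_cases j <;> simp [coe_diagHom, diagOneNegOne, hv]

lemma card_pmScalars_top (hℓ : ℓ ≠ 2) :
    Nat.card (pmScalars (⊤ : Subgroup (ZMod ℓ)ˣ)) = 2 * (ℓ - 1) := by
  rw [card_pmScalars hℓ, Subgroup.card_top, Nat.card_eq_fintype_card, ZMod.card_units]

end PmScalars

variable (ℓ) in
def nnsSubgroup (ε : ZMod ℓ) : Subgroup (GL2 ℓ) :=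
  Subgroup.ofMulMem (NnsSet ℓ ε) (Or.inl ⟨1, 0, by ext i j; fin_cases i <;> fin_cases j <;> simp⟩)
    mul_mem_nnsSet

lemma pmScalars_le_nnsSubgroup {S : Subgroup (ZMod ℓ)ˣ} : pmScalars S ≤ nnsSubgroup ℓ ε :=
  pmScalars_le (fun _ ⟨u, hu⟩ => hu ▸ Or.inl (scalar_mem_cnsSet u))
    (Or.inr ⟨1, 0, by simp [diagOneNegOne, coe_diagHom]⟩)

lemma belongsNns_of_le (hℓ : ℓ ≠ 2) (hε : ∀ t : ZMod ℓ, t ^ 2 ≠ ε) {G : Subgroup (GL2 ℓ)}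
    (hG : G ≤ nnsSubgroup ℓ ε) (hd : diagOneNegOne ℓ ∈ G) : BelongsNns ε G :=
  ⟨⟨1, fun g hg => by simpa using (show g ∈ NnsSet ℓ ε from hG hg)⟩, not_conjSub_cnsSet hℓ hε hd⟩

section SplitNormalizer

variable {Ns : Subgroup (GL2 ℓ)}

lemma diagSubgroup_le_ns (hNs : (Ns : Set (GL2 ℓ)) = NsSet ℓ) : diagSubgroup ℓ ≤ Ns :=
  fun g hg => by
    rw [← SetLike.mem_coe, hNs]
    exact Or.inl (mem_diagSubgroup.mp hg)

lemma antidiag_mem_ns (hNs : (Ns : Set (GL2 ℓ)) = NsSet ℓ) (a b : (ZMod ℓ)ˣ) :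
    antidiag a b ∈ Ns := by
  rw [← SetLike.mem_coe, hNs]
  exact Or.inr (by simp [coe_antidiag])

lemma pmScalars_le_ns (hNs : (Ns : Set (GL2 ℓ)) = NsSet ℓ) {S : Subgroup (ZMod ℓ)ˣ} :
    pmScalars S ≤ Ns :=
  pmScalars_le_diagSubgroup.trans (diagSubgroup_le_ns hNs)

lemma ns_eq_extension (hNs : (Ns : Set (GL2 ℓ)) = NsSet ℓ) :
    Ns = (diagSubgroup ℓ).extension (antidiag 1 1)
      (by rw [antidiag_mul_self, mul_one]; exact scalar_le_diagSubgroup ⟨1, rfl⟩)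
      (by rintro _ ⟨⟨a, b⟩, rfl⟩; rw [antidiag_one_conj_diagHom]; exact ⟨(b, a), rfl⟩) := by
  refine le_antisymm (fun x hx => ?_)
    (Subgroup.extension_le (diagSubgroup_le_ns hNs) (antidiag_mem_ns hNs 1 1))
  rw [← SetLike.mem_coe, hNs] at hx
  rcases hx with hx | ⟨h00, h11⟩
  · exact Or.inl (mem_diagSubgroup.mpr hx)
  · refine Or.inr ⟨x * antidiag 1 1, mem_diagSubgroup.mpr ?_, by
      rw [mul_assoc, antidiag_mul_self, mul_one, map_one, mul_one]⟩
    simp_all [CsSet, coe_antidiag, Matrix.mul_apply]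

lemma card_ns (hNs : (Ns : Set (GL2 ℓ)) = NsSet ℓ) : Nat.card Ns = 2 * (ℓ - 1) ^ 2 := by
  rw [ns_eq_extension hNs, Subgroup.card_extension, card_diagSubgroup]
  simp [mem_diagSubgroup, CsSet, coe_antidiag]

lemma relIndex_diagSubgroup_ns (hNs : (Ns : Set (GL2 ℓ)) = NsSet ℓ) :
    (diagSubgroup ℓ).relIndex Ns = 2 := by
  have h := Subgroup.card_mul_relIndex (diagSubgroup_le_ns hNs)
  rw [card_ns hNs, card_diagSubgroup, mul_comm 2] at h
  exact Nat.eq_of_mul_eq_mul_left (pow_pos (Nat.sub_pos_of_lt (Fact.out : ℓ.Prime).one_lt) 2) h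

lemma relIndex_ns_mul_eq_sq (hNs : (Ns : Set (GL2 ℓ)) = NsSet ℓ) {G : Subgroup (GL2 ℓ)}
    (hGNs : G ≤ Ns) {k : ℕ} (hk : Nat.card G = 2 * k) : G.relIndex Ns * k = (ℓ - 1) ^ 2 := by
  have h := Subgroup.card_mul_relIndex hGNs
  rw [hk, card_ns hNs, mul_assoc, mul_comm k] at h
  exact Nat.eq_of_mul_eq_mul_left two_pos h

lemma card_dvd_of_belongsNns (hℓ : ℓ ≠ 2) (hε : ∀ t : ZMod ℓ, t ^ 2 ≠ ε)
    (hNs : (Ns : Set (GL2 ℓ)) = NsSet ℓ) {G : Subgroup (GL2 ℓ)} (hGNs : G ≤ Ns)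
    (hG : BelongsNns ε G) : Nat.card G ∣ 2 * (2 * (ℓ - 1)) := by
  obtain ⟨⟨a, ha⟩, -⟩ := hG
  have hdiag : Nat.card (diagSubgroup ℓ ⊓ G : Subgroup (GL2 ℓ)) ∣ 2 * (ℓ - 1) :=
    card_pmScalars_top hℓ ▸ Subgroup.card_dvd_of_le fun g hg =>
      mem_pmScalars_of_conj_mem_nnsSet hε hg.1 (ha g hg.2)
  have hindex : (diagSubgroup ℓ).relIndex G ∣ 2 := by
    have hle := Subgroup.relIndex_le_of_le_right hGNs (by rw [relIndex_diagSubgroup_ns hNs]; simp)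
    rw [relIndex_diagSubgroup_ns hNs] at hle
    have := Subgroup.isFiniteRelIndex_of_finiteIndex (H := diagSubgroup ℓ) (K := G)
    have hpos := Subgroup.relIndex_ne_zero (H := diagSubgroup ℓ) (K := G)
    interval_cases (diagSubgroup ℓ).relIndex G <;> simp_all
  rw [← Subgroup.card_mul_relIndex (inf_le_right : diagSubgroup ℓ ⊓ G ≤ G),
    Subgroup.inf_relIndex_right, mul_comm 2]
  exact mul_dvd_mul hdiag hindex

lemma exists_card_eq_two_mul_of_belongsNns (hℓ : ℓ ≠ 2) (hε : ∀ t : ZMod ℓ, t ^ 2 ≠ ε)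
    (hNs : (Ns : Set (GL2 ℓ)) = NsSet ℓ) {G : Subgroup (GL2 ℓ)} (hGNs : G ≤ Ns)
    (hG : BelongsNns ε G) : ∃ k, k ∣ 2 * (ℓ - 1) ∧ Nat.card G = 2 * k := by
  obtain ⟨k, hk⟩ := two_dvd_card_of_belongsNns hG
  have hdvd := card_dvd_of_belongsNns hℓ hε hNs hGNs hG
  rw [hk] at hdvd
  exact ⟨k, Nat.dvd_of_mul_dvd_mul_left two_pos hdvd, hk⟩

lemma exists_belongsNns_card_eq_two_mul_of_dvd (hℓ : ℓ ≠ 2) (hε : ∀ t : ZMod ℓ, t ^ 2 ≠ ε)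
    (hNs : (Ns : Set (GL2 ℓ)) = NsSet ℓ) {k : ℕ} (hk : k ∣ ℓ - 1) :
    ∃ G ≤ Ns, BelongsNns ε G ∧ Nat.card G = 2 * k := by
  refine ⟨pmScalars (powMonoidHom k).ker, pmScalars_le_ns hNs,
    belongsNns_of_le hℓ hε pmScalars_le_nnsSubgroup diagOneNegOne_mem_pmScalars, ?_⟩
  rw [card_pmScalars hℓ, IsCyclic.card_powMonoidHom_ker, Nat.card_eq_fintype_card,
    ZMod.card_units, Nat.gcd_eq_right hk]

lemma exists_belongsNns_card_eq_four_mul (hℓ : ℓ ≠ 2) (hε : ∀ t : ZMod ℓ, t ^ 2 ≠ ε)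
    (hNs : (Ns : Set (GL2 ℓ)) = NsSet ℓ) {r t : ℕ} (hrt : ℓ - 1 = r * t) (hr : Even r)
    (ht : Odd t) : ∃ G ≤ Ns, BelongsNns ε G ∧ Nat.card G = 2 * (2 * r) := by
  obtain ⟨j, rfl⟩ := ht
  let e : (ZMod ℓ)ˣ := Units.mk0 ε fun h => hε 0 (by simp [h])
  set S := (powMonoidHom r : (ZMod ℓ)ˣ →* (ZMod ℓ)ˣ).ker
  set h := antidiag (-(e * e ^ j)) (e ^ j)
  -- `h * h = -ε ^ t`, whose `r`-th power is `ε ^ (ℓ - 1) = 1` since `r` is even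
  have hsq : h * h ∈ pmScalars S := by
    refine mem_pmScalars.mpr (Or.inl ⟨_, ?_, (antidiag_mul_self _ _).symm⟩)
    show (-(e * e ^ j) * e ^ j) ^ r = 1
    rw [neg_mul, hr.neg_pow, ← pow_succ', ← pow_add, ← pow_mul,
      show (j + 1 + j) * r = ℓ - 1 by rw [hrt]; ring, ZMod.units_pow_card_sub_one_eq_one]
  have hh : h ∉ pmScalars S := fun hmem => by
    have := (mem_diagSubgroup.mp (pmScalars_le_diagSubgroup hmem)).2
    simp [h, coe_antidiag] at this
  have hconj := conj_mem_pmScalars (antidiag_conj_diagOneNegOne (-(e * e ^ j)) (e ^ j))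
    (show (-1 : (ZMod ℓ)ˣ) ∈ S from hr.neg_one_pow)
  refine ⟨(pmScalars S).extension h hsq hconj,
    Subgroup.extension_le (pmScalars_le_ns hNs) (antidiag_mem_ns hNs _ _),
    belongsNns_of_le hℓ hε (Subgroup.extension_le pmScalars_le_nnsSubgroup ?_)
      (Subgroup.le_extension diagOneNegOne_mem_pmScalars), ?_⟩
  · exact Or.inr ⟨0, e ^ j, by simp [h, coe_antidiag, e]⟩
  · rw [Subgroup.card_extension hh, card_pmScalars hℓ, IsCyclic.card_powMonoidHom_ker,
      Nat.card_eq_fintype_card, ZMod.card_units, hrt, Nat.gcd_mul_right_left]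

lemma exists_belongsNns_card_eq_two_mul (hℓ : ℓ ≠ 2) (hε : ∀ t : ZMod ℓ, t ^ 2 ≠ ε)
    (hNs : (Ns : Set (GL2 ℓ)) = NsSet ℓ) {k : ℕ} (hk : k ∣ 2 * (ℓ - 1)) :
    ∃ G ≤ Ns, BelongsNns ε G ∧ Nat.card G = 2 * k := by
  by_cases hkn : k ∣ ℓ - 1
  · exact exists_belongsNns_card_eq_two_mul_of_dvd hℓ hε hNs hkn
  · have hn : Even (ℓ - 1) := ((Fact.out : ℓ.Prime).odd_of_ne_two hℓ).tsub_odd odd_one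
    obtain ⟨r, t, rfl, hrt, hr, ht⟩ := exists_even_mul_odd_of_dvd_two_mul hn hk hkn
    exact exists_belongsNns_card_eq_four_mul hℓ hε hNs hrt hr ht

end SplitNormalizer

end Prime

end NsIndex

open NsIndex

theorem statement_12 (ℓ : ℕ) (hℓ : Nat.Prime ℓ) (hodd : Odd ℓ) (ε : ZMod ℓ)
    (hε : ∀ t : ZMod ℓ, t ^ 2 ≠ ε)
    (Ns : Subgroup (GL2 ℓ)) (hNs : (Ns : Set (GL2 ℓ)) = Paper.NsSet ℓ) :
    { n : ℕ | ∃ G : Subgroup (GL2 ℓ), G ≤ Ns ∧ Paper.BelongsNns ε G ∧ G.relIndex Ns = n } =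
      { n : ℕ | 0 < n ∧ (ℓ - 1) / 2 ∣ n ∧ n ∣ (ℓ - 1) ^ 2 } := by
  have := Fact.mk hℓ
  have hℓ2 : ℓ ≠ 2 := by rintro rfl; exact absurd hodd (by decide)
  ext m
  rw [Set.mem_ofPred_eq, Set.mem_ofPred_eq,
    pos_and_half_dvd_and_dvd_sq_iff (hodd.tsub_odd odd_one) (Nat.sub_pos_of_lt hℓ.one_lt)]
  constructor
  · rintro ⟨G, hGNs, hG, rfl⟩
    obtain ⟨k, hk, hGk⟩ := exists_card_eq_two_mul_of_belongsNns hℓ2 hε hNs hGNs hG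
    exact ⟨k, hk, relIndex_ns_mul_eq_sq hNs hGNs hGk⟩
  · rintro ⟨k, hk, hmk⟩
    obtain ⟨G, hGNs, hG, hGk⟩ := exists_belongsNns_card_eq_two_mul hℓ2 hε hNs hk
    have hk0 : 0 < k := Nat.pos_of_ne_zero fun h => by
      rw [h, mul_zero, eq_comm, pow_eq_zero_iff two_ne_zero] at hmk
      exact (Nat.sub_pos_of_lt hℓ.one_lt).ne' hmk
    exact ⟨G, hGNs, hG,
      Nat.eq_of_mul_eq_mul_right hk0 (by rw [relIndex_ns_mul_eq_sq hNs hGNs hGk, hmk])⟩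
end

section
/- Let ℓ be an odd prime. Consider the set S of indices [GL₂(ℤ/ℓℤ) : G] over subgroups G of GL₂(ℤ/ℓℤ) such that some twist of G fixes a nonzero vector of (ℤ/ℓℤ)². Then (ℓ²−1)/2 belongs to S, and every element of S is divisible by (ℓ²−1)/2; that is, the set of div-minimal elements of S is {(ℓ²−1)/2}. -/
open Matrix

/-!
`GL₂(𝔽_ℓ)` acts transitively on the `ℓ² - 1` nonzero vectors, so a subgroup fixing a nonzero
vector lies in a stabilizer of index `ℓ² - 1`. Since `ℓ` is odd, such a subgroup does not contain
`-I`, so it is a twist of index `2` in `⟨G, -I⟩`; hence `(ℓ² - 1) / 2` divides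
`[GL₂ : ⟨G, -I⟩]`, which divides `[GL₂ : G]`. The stabilizer `S` of `e₁`, as a twist of
`G = ⟨S, -I⟩`, attains the bound.
-/

open MulAction

namespace Matrix.GeneralLinearGroup

section Semiring

variable {n R : Type*} [Fintype n] [DecidableEq n] [Semiring R]

theorem smul_def (g : GL n R) (v : n → R) : g • v = (g : Matrix n n R) *ᵥ v := rfl

end Semiring

variable {n K : Type*} [Fintype n] [DecidableEq n] [Field K]

theorem exists_smul_eq_of_ne_zero {v w : n → K} (hv : v ≠ 0) (hw : w ≠ 0) :
    ∃ g : GL n K, g • v = w := by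
  -- extend the isomorphism `K ∙ v ≃ K ∙ w` sending `v` to `w` to the whole space
  let f := (LinearEquiv.toSpanNonzeroSingleton K _ v hv).symm ≪≫ₗ
    LinearEquiv.toSpanNonzeroSingleton K _ w hw
  obtain ⟨e, he⟩ := Submodule.exists_linearEquiv_restrict_eq f
  let g : GL n K := toLin.symm ((LinearMap.GeneralLinearGroup.generalLinearEquiv K _).symm e)
  have hfv : (f ⟨v, Submodule.mem_span_singleton_self v⟩ : n → K) = w := by
    rw [← LinearEquiv.toSpanNonzeroSingleton_one K _ v hv, LinearEquiv.trans_apply,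
      LinearEquiv.symm_apply_apply, LinearEquiv.toSpanNonzeroSingleton_one]
  have hg : (toLin g : Module.End K (n → K)) = e := by
    simp only [g, MulEquiv.apply_symm_apply]
    rfl
  refine ⟨g, ?_⟩
  rw [← hfv, he, smul_def, ← mulVecLin_apply, ← coe_toLin, hg]
  rfl

theorem orbit_eq_setOf_ne_zero {v : n → K} (hv : v ≠ 0) :
    orbit (GL n K) v = {w | w ≠ 0} := by
  ext w
  refine ⟨?_, exists_smul_eq_of_ne_zero hv⟩
  rintro ⟨g, rfl⟩
  exact (smul_ne_zero_iff_ne g).mpr hv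

theorem index_stabilizer_of_ne_zero [Fintype K] {v : n → K} (hv : v ≠ 0) :
    (stabilizer (GL n K) v).index = Fintype.card K ^ Fintype.card n - 1 := by
  rw [index_stabilizer, orbit_eq_setOf_ne_zero hv, ← Set.compl_singleton_eq, Set.ncard_compl,
    Set.ncard_singleton, Nat.card_eq_fintype_card, Fintype.card_fun]

theorem neg_one_smul_ne_self (hK : ringChar K ≠ 2) {v : n → K} (hv : v ≠ 0) :
    (-1 : GL n K) • v ≠ v := by
  rw [smul_def, Units.val_neg, Units.val_one, neg_mulVec, one_mulVec]
  exact fun h => hv (funext fun i =>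
    (Ring.eq_self_iff_eq_zero_of_char_ne_two hK).mp (congrFun h i))

theorem neg_one_notMem_stabilizer (hK : ringChar K ≠ 2) {v : n → K} (hv : v ≠ 0) :
    (-1 : GL n K) ∉ stabilizer (GL n K) v :=
  neg_one_smul_ne_self hK hv

end Matrix.GeneralLinearGroup

namespace Subgroup

variable {n R : Type*} [Fintype n] [DecidableEq n] [Ring R]

theorem adjoinNegOne_eq_sup_closure (G : Subgroup (GL n R)) :
    G.adjoinNegOne = G ⊔ closure {-1} := by
  refine le_antisymm ?_ (sup_le G.le_adjoinNegOne ?_)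
  · rintro g (hg | hg)
    · exact mem_sup_left hg
    · rw [show g = -1 * -g by rw [neg_one_mul, neg_neg]]
      exact mul_mem (mem_sup_right (subset_closure (Set.mem_singleton _))) (mem_sup_left hg)
  · exact (closure_le _).2 (Set.singleton_subset_iff.2 G.negOne_mem_adjoinNegOne)

theorem index_eq_two_mul_index_adjoinNegOne {H : Subgroup (GL n R)} (hH : -1 ∉ H) :
    H.index = 2 * H.adjoinNegOne.index := by
  rw [← relIndex_mul_index H.le_adjoinNegOne, relindex_adjoinNegOne_eq_two hH]

end Subgroup

namespace Paper

variable {ℓ : ℕ} {G H : Subgroup (GL2 ℓ)}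

theorem twistOf_iff : TwistOf G H ↔ H = G.adjoinNegOne ∨
    (H ≤ G.adjoinNegOne ∧ H.relIndex G.adjoinNegOne = 2 ∧ (-1 : GL2 ℓ) ∉ H) := by
  rw [TwistOf, Subgroup.adjoinNegOne_eq_sup_closure]

theorem twistOf_adjoinNegOne (hH : (-1 : GL2 ℓ) ∉ H) : TwistOf H.adjoinNegOne H := by
  rw [twistOf_iff, Subgroup.adjoinNegOne_eq_self_iff.2 H.negOne_mem_adjoinNegOne]
  exact Or.inr ⟨H.le_adjoinNegOne, Subgroup.relindex_adjoinNegOne_eq_two hH, hH⟩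

theorem TwistOf.index_eq_two_mul (h : TwistOf G H) (hH : (-1 : GL2 ℓ) ∉ H) :
    H.index = 2 * G.adjoinNegOne.index := by
  rcases twistOf_iff.1 h with rfl | ⟨hle, hrel, -⟩
  · exact absurd G.negOne_mem_adjoinNegOne hH
  · rw [← Subgroup.relIndex_mul_index hle, hrel]

theorem fixesVec_iff : FixesVec H ↔ ∃ v : Fin 2 → ZMod ℓ, v ≠ 0 ∧ H ≤ stabilizer (GL2 ℓ) v :=
  Iff.rfl

end Paper

open Matrix.GeneralLinearGroup

theorem statement_17 (ℓ : ℕ) (hℓ : Nat.Prime ℓ) (hodd : Odd ℓ) :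
    (∃ G H : Subgroup (GL2 ℓ), Paper.TwistOf G H ∧ Paper.FixesVec H ∧
      G.index = (ℓ ^ 2 - 1) / 2) ∧
    (∀ G H : Subgroup (GL2 ℓ), Paper.TwistOf G H → Paper.FixesVec H →
      (ℓ ^ 2 - 1) / 2 ∣ G.index) := by
  have := Fact.mk hℓ
  have hchar : ringChar (ZMod ℓ) ≠ 2 := by
    rw [ZMod.ringChar_zmod_n]
    rintro rfl
    norm_num at hodd
  have hindex : ∀ v : Fin 2 → ZMod ℓ, v ≠ 0 →
      (stabilizer (GL2 ℓ) v).index = 2 * ((ℓ ^ 2 - 1) / 2) := fun v hv => by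
    rw [index_stabilizer_of_ne_zero hv, ZMod.card, Fintype.card_fin,
      Nat.two_mul_div_two_of_even (Nat.Odd.sub_odd hodd.pow odd_one)]
  refine ⟨?_, fun G H htw hfix => ?_⟩
  · have he : (![1, 0] : Fin 2 → ZMod ℓ) ≠ 0 := fun h => one_ne_zero (congrFun h 0)
    have hS := neg_one_notMem_stabilizer hchar he
    refine ⟨_, _, Paper.twistOf_adjoinNegOne hS, Paper.fixesVec_iff.2 ⟨_, he, le_rfl⟩, ?_⟩
    have := Subgroup.index_eq_two_mul_index_adjoinNegOne hS
    rw [hindex _ he] at this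
    omega
  · obtain ⟨v, hv, hle⟩ := Paper.fixesVec_iff.1 hfix
    have hH : (-1 : GL2 ℓ) ∉ H := fun h => neg_one_notMem_stabilizer hchar hv (hle h)
    have h2 : 2 * ((ℓ ^ 2 - 1) / 2) ∣ 2 * G.adjoinNegOne.index := by
      rw [← hindex v hv, ← htw.index_eq_two_mul hH]
      exact Subgroup.index_dvd_of_le hle
    exact (Nat.dvd_of_mul_dvd_mul_left two_pos h2).trans
      (Subgroup.index_dvd_of_le G.le_adjoinNegOne)
end

section
/- Let ℓ be an odd prime. Consider the set S of indices [N_ns(ℓ) : G] over subgroups G of N_ns(ℓ) such that some twist of G fixes a nonzero vector of (ℤ/ℓℤ)². Then (ℓ²−1)/2 belongs to S, and every element of S is divisible by (ℓ²−1)/2; that is, the set of div-minimal elements of S is {(ℓ²−1)/2}. -/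
open Matrix

/-! An element `!![x, ε y; y, x]` of `C_ns(ℓ)` fixing a nonzero vector is trivial: the
determinant `(x - 1)² - ε y²` of its difference with `1` vanishes only at `x = 1, y = 0`, since `ε`
is not a square. So a subgroup of `N_ns(ℓ)` fixing a nonzero vector meets `C_ns(ℓ)` trivially and
has order at most 2. A group `G` with such a twist therefore has order dividing 4, and its index in
`N_ns(ℓ)`, a group of order `2(ℓ² - 1)`, is a multiple of `(ℓ² - 1)/2`. Equality is attained by
`G = {±1, ±diag(1, -1)}`, whose twist `{1, diag(1, -1)}` fixes `e₁`. -/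

open Paper

section NonsquareForm

variable {K : Type*} [Field K] {ε : K}

theorem sq_sub_mul_sq_eq_zero_iff (hε : ∀ t : K, t ^ 2 ≠ ε) {x y : K} :
    x ^ 2 - ε * y ^ 2 = 0 ↔ x = 0 ∧ y = 0 := by
  refine ⟨fun h => ?_, fun ⟨hx, hy⟩ => by simp [hx, hy]⟩
  by_cases hy : y = 0
  · subst hy
    exact ⟨pow_eq_zero_iff two_ne_zero |>.mp (by simpa using h), rfl⟩
  · exact absurd (by field_simp; linear_combination h) (hε (x / y))

theorem eq_one_of_mulVec_eq_self (hε : ∀ t : K, t ^ 2 ≠ ε) {x y : K} {v : Fin 2 → K}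
    (hv : v ≠ 0) (h : !![x, ε * y; y, x] *ᵥ v = v) : x = 1 ∧ y = 0 := by
  have hdet : (!![x - 1, ε * y; y, x - 1]).det = 0 := by
    refine exists_mulVec_eq_zero_iff.mp ⟨v, hv, ?_⟩
    have : !![x - 1, ε * y; y, x - 1] = !![x, ε * y; y, x] - 1 := by
      rw [one_fin_two]; simp
    rw [this, sub_mulVec, one_mulVec, h, sub_self]
  rw [det_fin_two_of] at hdet
  obtain ⟨hx, hy⟩ :=
    (sq_sub_mul_sq_eq_zero_iff (x := x - 1) (y := y) hε).mp (by linear_combination hdet)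
  exact ⟨sub_eq_zero.mp hx, hy⟩

end NonsquareForm

theorem reflection_mul_reflection {R : Type*} [CommRing R] (ε x y x' y' : R) :
    !![x, -(ε * y); y, -x] * !![x', -(ε * y'); y', -x'] =
      !![x * x' - ε * (y * y'), ε * (y * x' - x * y'); y * x' - x * y', x * x' - ε * (y * y')] := by
  rw [mul_fin_two]; ring_nf

section Parametrization

variable {K : Type*} [Field K] {ε : K}

def nnsMatrix (ε : K) (b : Bool) (p : K × K) : Matrix (Fin 2) (Fin 2) K :=
  if b then !![p.1, -(ε * p.2); p.2, -p.1] else !![p.1, ε * p.2; p.2, p.1]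

theorem det_nnsMatrix_ne_zero (hε : ∀ t : K, t ^ 2 ≠ ε) (b : Bool) {p : K × K} (hp : p ≠ 0) :
    (nnsMatrix ε b p).det ≠ 0 := by
  have hq : p.1 ^ 2 - ε * p.2 ^ 2 ≠ 0 := fun h =>
    hp (Prod.ext_iff.mpr ((sq_sub_mul_sq_eq_zero_iff hε).mp h))
  intro h
  apply hq
  cases b <;> simp only [nnsMatrix, Bool.false_eq_true, if_true, if_false, det_fin_two_of] at h
  · linear_combination h
  · linear_combination -h

theorem nnsMatrix_injective (h2 : (2 : K) ≠ 0) (hε : ε ≠ 0) :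
    Function.Injective fun bp : Bool × {p : K × K // p ≠ 0} => nnsMatrix ε bp.1 bp.2.1 := by
  have eq_zero_of_eq_neg (a : K) (ha : a = -a) : a = 0 :=
    (mul_eq_zero.mp (by linear_combination ha : (2 : K) * a = 0)).resolve_left h2
  rintro ⟨b, p, hp⟩ ⟨b', p', _⟩ h
  have h00 := congrFun₂ h 0 0
  have h10 := congrFun₂ h 1 0
  have h01 := congrFun₂ h 0 1
  have h11 := congrFun₂ h 1 1
  -- both cosets share the first column `(p.1, p.2)`
  obtain rfl : p = p' := by
    cases b <;> cases b' <;> simp only [nnsMatrix, Bool.false_eq_true, if_true, if_false,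
      of_apply, cons_val', cons_val_zero, cons_val_one, empty_val', cons_val_fin_one] at h00 h10 <;>
      exact Prod.ext h00 h10
  have hp0 (h01 : ε * p.2 = -(ε * p.2)) (h11 : p.1 = -p.1) : False :=
    hp (Prod.ext (eq_zero_of_eq_neg _ h11)
      ((mul_eq_zero.mp (eq_zero_of_eq_neg _ h01)).resolve_left hε))
  cases b <;> cases b' <;> simp only [nnsMatrix, Bool.false_eq_true, if_true, if_false,
      of_apply, cons_val', cons_val_zero, cons_val_one, empty_val', cons_val_fin_one] at h01 h11
  · rfl
  · exact (hp0 h01 h11).elim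
  · exact (hp0 h01.symm h11.symm).elim
  · rfl

end Parametrization

theorem ringChar_zmod_ne_two {ℓ : ℕ} (hodd : Odd ℓ) : ringChar (ZMod ℓ) ≠ 2 := by
  rw [ZMod.ringChar_zmod_n]
  rintro rfl
  exact Nat.not_even_iff_odd.mpr hodd even_two

section NonsplitNormalizer

variable {ℓ : ℕ} [Fact ℓ.Prime] {ε : ZMod ℓ}

noncomputable def nnsParam (hε : ∀ t : ZMod ℓ, t ^ 2 ≠ ε)
    (bp : Bool × {p : ZMod ℓ × ZMod ℓ // p ≠ 0}) : NnsSet ℓ ε :=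
  ⟨GeneralLinearGroup.mkOfDetNeZero _ (det_nnsMatrix_ne_zero hε bp.1 bp.2.2), by
    cases bp.1
    exacts [Or.inl ⟨_, _, rfl⟩, Or.inr ⟨_, _, rfl⟩]⟩

theorem nnsParam_bijective (hodd : Odd ℓ) (hε : ∀ t : ZMod ℓ, t ^ 2 ≠ ε) :
    Function.Bijective (nnsParam hε) := by
  refine ⟨fun bp bp' h => ?_, ?_⟩
  · have hε0 : ε ≠ 0 := fun h0 => hε 0 (by simp [h0])
    exact nnsMatrix_injective (Ring.two_ne_zero (ringChar_zmod_ne_two hodd)) hε0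
      (congrArg (fun g : NnsSet ℓ ε => mat g.1) h)
  · rintro ⟨g, ⟨x, y, hg⟩ | ⟨x, y, hg⟩⟩
    all_goals
      have hxy : (x, y) ≠ 0 := fun h0 => g.ne_zero (by
        simp only [Prod.mk_eq_zero] at h0
        rw [← mat, hg, h0.1, h0.2]; simp [← Matrix.ext_iff, Fin.forall_fin_two])
    · exact ⟨(false, ⟨_, hxy⟩), Subtype.ext (Units.ext hg.symm)⟩
    · exact ⟨(true, ⟨_, hxy⟩), Subtype.ext (Units.ext hg.symm)⟩

theorem card_nnsSet (hodd : Odd ℓ) (hε : ∀ t : ZMod ℓ, t ^ 2 ≠ ε) :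
    Nat.card (NnsSet ℓ ε) = 2 * (ℓ ^ 2 - 1) := by
  have : NeZero ℓ := ⟨(Fact.out : ℓ.Prime).ne_zero⟩
  rw [← Nat.card_congr (Equiv.ofBijective _ (nnsParam_bijective hodd hε)), Nat.card_prod,
    Nat.card_eq_fintype_card (α := {p : ZMod ℓ × ZMod ℓ // p ≠ 0}), Fintype.card_subtype_compl,
    Fintype.card_subtype_eq, Fintype.card_prod, ZMod.card, sq]
  simp

theorem eq_one_of_mem_cnsSet_of_mulVec_eq_self (hε : ∀ t : ZMod ℓ, t ^ 2 ≠ ε) {g : GL2 ℓ}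
    (hg : g ∈ CnsSet ℓ ε) {v : Fin 2 → ZMod ℓ} (hv : v ≠ 0) (hfix : mat g *ᵥ v = v) : g = 1 := by
  obtain ⟨x, y, hm⟩ := hg
  rw [hm] at hfix
  obtain ⟨rfl, rfl⟩ := eq_one_of_mulVec_eq_self hε hv hfix
  exact Units.ext (hm.trans (by simp [one_fin_two]))

theorem mul_mem_cnsSet_of_notMem {g h : GL2 ℓ} (hg : g ∈ NnsSet ℓ ε) (hg' : g ∉ CnsSet ℓ ε)
    (hh : h ∈ NnsSet ℓ ε) (hh' : h ∉ CnsSet ℓ ε) : g * h ∈ CnsSet ℓ ε := by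
  obtain ⟨x, y, hgm⟩ := hg.resolve_left hg'
  obtain ⟨x', y', hhm⟩ := hh.resolve_left hh'
  exact ⟨_, _, (congrArg₂ (· * ·) hgm hhm).trans (reflection_mul_reflection ε x y x' y')⟩

theorem neg_one_mem_nnsSet : (-1 : GL2 ℓ) ∈ NnsSet ℓ ε :=
  Or.inl ⟨-1, 0, by simp [mat, one_fin_two]⟩

theorem card_le_two_of_fixesVec (hε : ∀ t : ZMod ℓ, t ^ 2 ≠ ε) {H : Subgroup (GL2 ℓ)}
    (hH : (H : Set (GL2 ℓ)) ⊆ NnsSet ℓ ε) (hfix : FixesVec H) : Nat.card H ≤ 2 := by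
  classical
  obtain ⟨v, hv, hfixv⟩ := hfix
  have eq_one {h : GL2 ℓ} (hh : h ∈ H) (hc : h ∈ CnsSet ℓ ε) : h = 1 :=
    eq_one_of_mem_cnsSet_of_mulVec_eq_self hε hc hv (hfixv h hh)
  -- `H` meets `C_ns` trivially, and meets the other coset at most once since `a * a = 1 = a * b`
  have hinj : Function.Injective fun h : H => decide ((h : GL2 ℓ) ∈ CnsSet ℓ ε) := by
    rintro ⟨a, ha⟩ ⟨b, hb⟩ hab
    simp only [decide_eq_decide] at hab
    refine Subtype.ext ?_
    by_cases hac : a ∈ CnsSet ℓ ε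
    · exact (eq_one ha hac).trans (eq_one hb (hab.mp hac)).symm
    · have hbc : b ∉ CnsSet ℓ ε := mt hab.mpr hac
      have haa := eq_one (mul_mem ha ha) (mul_mem_cnsSet_of_notMem (hH ha) hac (hH ha) hac)
      have hab' := eq_one (mul_mem ha hb) (mul_mem_cnsSet_of_notMem (hH ha) hac (hH hb) hbc)
      exact mul_left_cancel (haa.trans hab'.symm)
  simpa using Nat.card_le_card_of_injective _ hinj

end NonsplitNormalizer

theorem Subgroup.card_mul_relIndex_s19 {Γ : Type*} [Group Γ] {H K : Subgroup Γ} (h : H ≤ K) :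
    Nat.card H * H.relIndex K = Nat.card K := by
  simpa [Subgroup.relIndex_bot_left] using Subgroup.relIndex_mul_relIndex ⊥ H K bot_le h

namespace Paper.TwistOf

variable {ℓ : ℕ} {G H : Subgroup (GL2 ℓ)}

theorem le_sup (h : TwistOf G H) : H ≤ G ⊔ Subgroup.closure {-1} := by
  rcases h with rfl | ⟨hle, -⟩
  exacts [le_rfl, hle]

theorem card_sup_dvd (h : TwistOf G H) :
    Nat.card ↥(G ⊔ Subgroup.closure {-1}) ∣ 2 * Nat.card H := by
  rcases h with rfl | ⟨hle, hidx, -⟩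
  · exact dvd_mul_left _ _
  · rw [← Subgroup.card_mul_relIndex_s19 hle, hidx, mul_comm]

end Paper.TwistOf

section SignDiagonal

variable (R : Type*) [CommRing R]

def signDiag : ℤˣ × ℤˣ →* GL (Fin 2) R where
  toFun s :=
    ⟨!![((s.1 : ℤ) : R), 0; 0, ((s.2 : ℤ) : R)], !![((s.1 : ℤ) : R), 0; 0, ((s.2 : ℤ) : R)],
      by simp [one_fin_two, ← Int.cast_mul], by simp [one_fin_two, ← Int.cast_mul]⟩
  map_one' := by ext : 1; simp [one_fin_two]
  map_mul' s t := by ext : 1; simp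

variable {R}

theorem signDiag_injective (h : (-1 : R) ≠ 1) : Function.Injective (signDiag R) := by
  refine (injective_iff_map_eq_one _).mpr fun ⟨a, b⟩ hab => ?_
  have h00 := congrArg (fun g : GL (Fin 2) R => (g : Matrix (Fin 2) (Fin 2) R) 0 0) hab
  have h11 := congrArg (fun g : GL (Fin 2) R => (g : Matrix (Fin 2) (Fin 2) R) 1 1) hab
  rcases Int.units_eq_one_or a with rfl | rfl <;> rcases Int.units_eq_one_or b with rfl | rfl <;>
    simp [signDiag, h] at h00 h11 ⊢

end SignDiagonal

theorem exists_twistOf_fixesVec_card_eq_four {ℓ : ℕ} (ε : ZMod ℓ) (h : (-1 : ZMod ℓ) ≠ 1) :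
    ∃ G H : Subgroup (GL2 ℓ), (G : Set (GL2 ℓ)) ⊆ NnsSet ℓ ε ∧ TwistOf G H ∧ FixesVec H ∧
      Nat.card G = 4 := by
  set G := (signDiag (ZMod ℓ)).range
  set H := ((signDiag (ZMod ℓ)).comp (MonoidHom.inr ℤˣ ℤˣ)).range
  have hinj := signDiag_injective h
  have hcardG : Nat.card G = 4 := by
    rw [← Nat.card_congr (MonoidHom.ofInjective hinj).toEquiv]
    simp
  have hinjH : Function.Injective ((signDiag (ZMod ℓ)).comp (MonoidHom.inr ℤˣ ℤˣ)) :=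
    fun a b hab => Prod.mk_right_injective 1 (hinj hab)
  have hcardH : Nat.card H = 2 := by
    rw [← Nat.card_congr (MonoidHom.ofInjective hinjH).toEquiv]
    simp
  have hneg : signDiag (ZMod ℓ) (-1, -1) = -1 := by
    ext i j
    fin_cases i <;> fin_cases j <;> simp [signDiag]
  have hsup : G ⊔ Subgroup.closure {-1} = G :=
    sup_eq_left.mpr ((Subgroup.closure_le _).mpr (Set.singleton_subset_iff.mpr ⟨_, hneg⟩))
  have hHG : H ≤ G := (MonoidHom.range_comp _ _).trans_le (Subgroup.map_le_range _ _)
  refine ⟨G, H, ?_, Or.inr ⟨hsup.symm ▸ hHG, ?_, ?_⟩, ?_, hcardG⟩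
  · rintro _ ⟨⟨a, b⟩, rfl⟩
    rcases Int.units_eq_one_or a with rfl | rfl <;> rcases Int.units_eq_one_or b with rfl | rfl
    exacts [Or.inl ⟨1, 0, by simp [signDiag, mat]⟩, Or.inr ⟨1, 0, by simp [signDiag, mat]⟩,
      Or.inr ⟨-1, 0, by simp [signDiag, mat]⟩, Or.inl ⟨-1, 0, by simp [signDiag, mat]⟩]
  · have := Subgroup.card_mul_relIndex_s19 hHG
    rw [hcardH, hcardG] at this
    rw [hsup]
    omega
  · rintro ⟨b, hb⟩
    have := congrArg Prod.fst (hinj (hb.trans hneg.symm))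
    simp [Units.ext_iff] at this
  · have : Nontrivial (ZMod ℓ) := ⟨⟨-1, 1, h⟩⟩
    refine ⟨![1, 0], by simp, ?_⟩
    rintro _ ⟨b, rfl⟩
    ext i
    fin_cases i <;> simp [signDiag, mat]

theorem statement_19 (ℓ : ℕ) (hℓ : Nat.Prime ℓ) (hodd : Odd ℓ) (ε : ZMod ℓ)
    (hε : ∀ t : ZMod ℓ, t ^ 2 ≠ ε)
    (Nns : Subgroup (GL2 ℓ)) (hNns : (Nns : Set (GL2 ℓ)) = Paper.NnsSet ℓ ε) :
    (∃ G H : Subgroup (GL2 ℓ), G ≤ Nns ∧ Paper.TwistOf G H ∧ Paper.FixesVec H ∧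
      G.relIndex Nns = (ℓ ^ 2 - 1) / 2) ∧
    (∀ G H : Subgroup (GL2 ℓ), G ≤ Nns → Paper.TwistOf G H → Paper.FixesVec H →
      (ℓ ^ 2 - 1) / 2 ∣ G.relIndex Nns) := by
  have : Fact ℓ.Prime := ⟨hℓ⟩
  have hcard : Nat.card Nns = 4 * ((ℓ ^ 2 - 1) / 2) := by
    have : 2 ∣ ℓ ^ 2 - 1 := (Nat.Odd.sub_odd hodd.pow odd_one).two_dvd
    rw [← SetLike.coe_sort_coe, hNns, card_nnsSet hodd hε]
    omega
  have hle {K : Subgroup (GL2 ℓ)} : K ≤ Nns ↔ (K : Set (GL2 ℓ)) ⊆ NnsSet ℓ ε := by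
    rw [← hNns, SetLike.coe_subset_coe]
  refine ⟨?_, fun G H hG htw hfix => ?_⟩
  · obtain ⟨G, H, hG, htw, hfix, hcardG⟩ := exists_twistOf_fixesVec_card_eq_four ε
      (Ring.neg_one_ne_one_of_char_ne_two (ringChar_zmod_ne_two hodd))
    refine ⟨G, H, hle.mpr hG, htw, hfix, ?_⟩
    have := Subgroup.card_mul_relIndex_s19 (hle.mpr hG)
    rw [hcardG, hcard] at this
    omega
  · have hneg : Subgroup.closure {-1} ≤ Nns := by
      rw [Subgroup.closure_le, hNns, Set.singleton_subset_iff]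
      exact neg_one_mem_nnsSet
    have hH : Nat.card H ∣ 2 := by
      have := card_le_two_of_fixesVec hε (hle.mp (htw.le_sup.trans (sup_le hG hneg))) hfix
      have : 0 < Nat.card H := Nat.card_pos
      interval_cases Nat.card H <;> norm_num
    obtain ⟨t, ht⟩ : Nat.card G ∣ 4 := (Subgroup.card_dvd_of_le le_sup_left).trans
      (htw.card_sup_dvd.trans (mul_dvd_mul_left 2 hH))
    refine Nat.dvd_of_mul_dvd_mul_left (Nat.card_pos (α := G)) ⟨t, ?_⟩
    rw [Subgroup.card_mul_relIndex_s19 hG, hcard, ht]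
    ring
end
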